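/- arXiv:2307.08135 — 4 statements merged into one kernel-verified Lean document; each statement's English description precedes it below -/
import Mathlib

section
/- Let α ∈ (0,1] with α ≤ 1/3, and let k and t be positive integers satisfying t = ⌈ 1 / (1 − ((1−α)/2)^k)^{2t−1} ⌉. Set θ = 1 − ((1−α)/2)^k. Then the closed interval [θ^{t+1}, θ^{t−1}] is contained in the set Γ = { Π_{i=1}^{2t} c_i : c_i ∈ C_α }; that is, every x ∈ [θ^{t+1}, θ^{t−1}] is a product of 2t elements of C_α. -/
open scoped BigOperators
open Finset Filter

/-- The central Cantor set `C_α ⊆ [0,1]`: the set of all sums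
`Σ_{n} ε_n · ((1+α)/2) · ((1−α)/2)^n` with `ε_n ∈ {0,1}`. -/
noncomputable def centralCantor (α : ℝ) : Set ℝ :=
  {x | ∃ ε : ℕ → ℝ, (∀ n, ε n = 0 ∨ ε n = 1) ∧
    x = ∑' n : ℕ, ε n * ((1 + α) / 2) * ((1 - α) / 2) ^ n}


section Basic

variable {α : ℝ}

lemma cc_term_nonneg (h0 : 0 < α) (h1 : α ≤ 1) {ε : ℕ → ℝ}
    (hε : ∀ n, ε n = 0 ∨ ε n = 1) (n : ℕ) :
    0 ≤ ε n * ((1 + α) / 2) * ((1 - α) / 2) ^ n := by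
  have h2 : (0:ℝ) ≤ (1 - α)/2 := by linarith
  have h3 : (0:ℝ) ≤ (1 + α)/2 := by linarith
  rcases hε n with h | h <;> rw [h]
  · simp
  · have := pow_nonneg h2 n; nlinarith

lemma cc_term_le (h0 : 0 < α) (h1 : α ≤ 1) {ε : ℕ → ℝ}
    (hε : ∀ n, ε n = 0 ∨ ε n = 1) (n : ℕ) :
    ε n * ((1 + α) / 2) * ((1 - α) / 2) ^ n ≤ ((1 + α) / 2) * ((1 - α) / 2) ^ n := by
  have h2 : (0:ℝ) ≤ (1 - α)/2 := by linarith
  have h3 : (0:ℝ) ≤ (1 + α)/2 := by linarith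
  have h4 := pow_nonneg h2 n
  rcases hε n with h | h <;> rw [h] <;> nlinarith

lemma cc_summable (h0 : 0 < α) (h1 : α ≤ 1) {ε : ℕ → ℝ}
    (hε : ∀ n, ε n = 0 ∨ ε n = 1) :
    Summable (fun n => ε n * ((1 + α) / 2) * ((1 - α) / 2) ^ n) := by
  have h2 : (0:ℝ) ≤ (1 - α)/2 := by linarith
  have h5 : (1 - α)/2 < 1 := by linarith
  refine Summable.of_nonneg_of_le (cc_term_nonneg h0 h1 hε) (fun n => ?_)
    ((summable_geometric_of_lt_one h2 h5).mul_left ((1 + α)/2))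
  exact cc_term_le h0 h1 hε n

lemma cc_zero_mem (h0 : 0 < α) (h1 : α ≤ 1) : (0:ℝ) ∈ centralCantor α :=
  ⟨fun _ => 0, fun _ => Or.inl rfl, by simp⟩

lemma cc_nonneg (h0 : 0 < α) (h1 : α ≤ 1) {y : ℝ} (hy : y ∈ centralCantor α) : 0 ≤ y := by
  obtain ⟨ε, hε, rfl⟩ := hy
  exact tsum_nonneg (cc_term_nonneg h0 h1 hε)

lemma cc_le_one (h0 : 0 < α) (h1 : α ≤ 1) {y : ℝ} (hy : y ∈ centralCantor α) : y ≤ 1 := by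
  obtain ⟨ε, hε, rfl⟩ := hy
  have h2 : (0:ℝ) ≤ (1 - α)/2 := by linarith
  have h5 : (1 - α)/2 < 1 := by linarith
  have hs2 : Summable (fun n : ℕ => ((1 + α)/2) * ((1 - α)/2) ^ n) :=
    (summable_geometric_of_lt_one h2 h5).mul_left _
  have := Summable.tsum_le_tsum (cc_term_le h0 h1 hε) (cc_summable h0 h1 hε) hs2
  calc (∑' n : ℕ, ε n * ((1 + α) / 2) * ((1 - α) / 2) ^ n)
      ≤ ∑' n : ℕ, ((1 + α)/2) * ((1 - α)/2) ^ n := this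
    _ = ((1 + α)/2) * (1 - (1 - α)/2)⁻¹ := by
        rw [tsum_mul_left, tsum_geometric_of_lt_one h2 h5]
    _ = 1 := by
        have : (1:ℝ) - (1 - α)/2 = (1 + α)/2 := by ring
        rw [this, mul_inv_cancel₀ (by linarith)]

lemma cc_scale (h0 : 0 < α) (h1 : α ≤ 1) {y : ℝ} (hy : y ∈ centralCantor α) :
    ((1 - α)/2) * y ∈ centralCantor α := by
  obtain ⟨ε, hε, rfl⟩ := hy
  refine ⟨fun n => match n with | 0 => (0:ℝ) | (m+1) => ε m, fun n => ?_, ?_⟩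
  · match n with
    | 0 => exact Or.inl rfl
    | (m+1) => exact hε m
  · have hs' : Summable (fun n => (fun n => match n with | 0 => (0:ℝ) | (m+1) => ε m) n
        * ((1 + α) / 2) * ((1 - α) / 2) ^ n) := by
      apply cc_summable h0 h1
      intro n
      match n with
      | 0 => exact Or.inl rfl
      | (m+1) => exact hε m
    rw [Summable.tsum_eq_zero_add hs']
    simp only []
    have : (fun n : ℕ => ε n * ((1 + α) / 2) * ((1 - α) / 2) ^ (n + 1))
        = fun n : ℕ => ((1 - α)/2) * (ε n * ((1 + α) / 2) * ((1 - α) / 2) ^ n) := by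
      funext n; ring
    rw [show ∀ z : ℝ, (0:ℝ) * ((1+α)/2) * ((1-α)/2)^0 + z = z from fun z => by ring]
    calc ((1 - α)/2) * (∑' n : ℕ, ε n * ((1 + α) / 2) * ((1 - α) / 2) ^ n)
        = ∑' n : ℕ, ((1 - α)/2) * (ε n * ((1 + α) / 2) * ((1 - α) / 2) ^ n) := by
          rw [tsum_mul_left]
      _ = ∑' n : ℕ, ε n * ((1 + α) / 2) * ((1 - α) / 2) ^ (n + 1) := by rw [← this]

lemma cc_shift (h0 : 0 < α) (h1 : α ≤ 1) {y : ℝ} (hy : y ∈ centralCantor α) :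
    (1 + α)/2 + ((1 - α)/2) * y ∈ centralCantor α := by
  obtain ⟨ε, hε, rfl⟩ := hy
  refine ⟨fun n => match n with | 0 => (1:ℝ) | (m+1) => ε m, fun n => ?_, ?_⟩
  · match n with
    | 0 => exact Or.inr rfl
    | (m+1) => exact hε m
  · have hs' : Summable (fun n => (fun n => match n with | 0 => (1:ℝ) | (m+1) => ε m) n
        * ((1 + α) / 2) * ((1 - α) / 2) ^ n) := by
      apply cc_summable h0 h1
      intro n
      match n with
      | 0 => exact Or.inr rfl
      | (m+1) => exact hε m
    rw [Summable.tsum_eq_zero_add hs']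
    simp only []
    have : (fun n : ℕ => ε n * ((1 + α) / 2) * ((1 - α) / 2) ^ (n + 1))
        = fun n : ℕ => ((1 - α)/2) * (ε n * ((1 + α) / 2) * ((1 - α) / 2) ^ n) := by
      funext n; ring
    rw [show ∀ z : ℝ, (1:ℝ) * ((1+α)/2) * ((1-α)/2)^0 + z = ((1+α)/2) + z from fun z => by ring]
    congr 1
    calc ((1 - α)/2) * (∑' n : ℕ, ε n * ((1 + α) / 2) * ((1 - α) / 2) ^ n)
        = ∑' n : ℕ, ((1 - α)/2) * (ε n * ((1 + α) / 2) * ((1 - α) / 2) ^ n) := by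
          rw [tsum_mul_left]
      _ = ∑' n : ℕ, ε n * ((1 + α) / 2) * ((1 - α) / 2) ^ (n + 1) := by rw [← this]

lemma cc_affine (h0 : 0 < α) (h1 : α ≤ 1) (k : ℕ) {y : ℝ} (hy : y ∈ centralCantor α) :
    (1 - ((1 - α)/2) ^ k) + ((1 - α)/2) ^ k * y ∈ centralCantor α := by
  induction k with
  | zero => simpa using hy
  | succ k ih =>
      have := cc_shift h0 h1 ih
      have e : (1 + α)/2 + ((1 - α)/2) * ((1 - ((1 - α)/2) ^ k) + ((1 - α)/2) ^ k * y)
          = (1 - ((1 - α)/2) ^ (k+1)) + ((1 - α)/2) ^ (k+1) * y := by ring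
      rwa [e] at this

lemma cc_isCompact (h0 : 0 < α) (h1 : α ≤ 1) : IsCompact (centralCantor α) := by
  classical
  have h2 : (0:ℝ) ≤ (1 - α)/2 := by linarith
  have h5 : (1 - α)/2 < 1 := by linarith
  have hrange : centralCantor α = Set.range (fun b : ℕ → Bool =>
      ∑' n : ℕ, (if b n then (1:ℝ) else 0) * ((1 + α) / 2) * ((1 - α) / 2) ^ n) := by
    ext x
    constructor
    · rintro ⟨ε, hε, rfl⟩
      refine ⟨fun n => if ε n = 1 then true else false, ?_⟩
      simp only []
      congr 1
      funext n
      rcases hε n with h | h <;> simp [h]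
    · rintro ⟨b, rfl⟩
      exact ⟨fun n => if b n then 1 else 0, fun n => by by_cases h : b n <;> simp [h], rfl⟩
  rw [hrange]
  apply isCompact_range
  apply continuous_tsum (u := fun n : ℕ => ((1 + α)/2) * ((1 - α)/2) ^ n)
  · intro n
    exact (continuous_of_discreteTopology
      (f := fun v : Bool => (if v then (1:ℝ) else 0) * ((1 + α) / 2) * ((1 - α) / 2) ^ n)).comp
      (continuous_apply n)
  · exact (summable_geometric_of_lt_one h2 h5).mul_left _
  · intro n b
    have h3 : (0:ℝ) ≤ (1 + α)/2 := by linarith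
    have h4 := pow_nonneg h2 n
    by_cases h : b n <;>
      simp only [h, if_true, if_false, one_mul, zero_mul, Real.norm_eq_abs]
    · rw [abs_of_nonneg (by positivity)]
    · rw [if_neg (by exact Bool.false_ne_true), zero_mul, zero_mul, abs_zero]; positivity

end Basic

section Construction

/-- State invariant for the product-covering construction. -/
def CInv (α x : ℝ) {N : ℕ} (g : Fin N → ℝ × ℝ) : Prop :=
  (∀ i, 1/2 ≤ (g i).1) ∧ (∀ i, (g i).1 + (g i).2 ≤ 1) ∧ (∀ i, 0 < (g i).2) ∧
  (∏ i, (g i).1) ≤ x ∧ x ≤ (∏ i, ((g i).1 + (g i).2)) ∧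
  (∀ i, ∀ c ∈ centralCantor α, (g i).1 + (g i).2 * c ∈ centralCantor α)

/-- One refinement step at coordinate `j`. -/
noncomputable def updStep (r x : ℝ) {N : ℕ} (g : Fin N → ℝ × ℝ) (j : Fin N) :
    Fin N → ℝ × ℝ :=
  if x ≤ ((g j).1 + r * (g j).2) * ∏ i ∈ Finset.univ.erase j, ((g i).1 + (g i).2)
  then Function.update g j ((g j).1, r * (g j).2)
  else Function.update g j ((g j).1 + (1 - r) * (g j).2, r * (g j).2)

/-- Refine coordinates `0, 1, …, j-1` in order. -/
noncomputable def sweep (r x : ℝ) {N : ℕ} (g : Fin N → ℝ × ℝ) : ℕ → (Fin N → ℝ × ℝ)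
  | 0 => g
  | (j+1) => if h : j < N then updStep r x (sweep r x g j) ⟨j, h⟩ else sweep r x g j

/-- Full evolution: one sweep per round. -/
noncomputable def evolve (r x θ : ℝ) (N k : ℕ) : ℕ → (Fin N → ℝ × ℝ)
  | 0 => fun _ => (θ, r ^ k)
  | (m+1) => sweep r x (evolve r x θ N k m) N

lemma cover_ineq {r : ℝ} (hr1 : 1/3 ≤ r) (hr2 : r ≤ 1/2) {N : ℕ} (hN : 3 ≤ N)
    (g : Fin N → ℝ × ℝ) (j : Fin N)
    (hhalf : ∀ i, 1/2 ≤ (g i).1) (hone : ∀ i, (g i).1 + (g i).2 ≤ 1)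
    (hpos : ∀ i, 0 < (g i).2)
    (hlw : ∀ i, i ≠ j → r * (g j).2 ≤ (g i).2) :
    ((g j).1 + (1 - r) * (g j).2) * ∏ i ∈ Finset.univ.erase j, (g i).1
      ≤ ((g j).1 + r * (g j).2) * ∏ i ∈ Finset.univ.erase j, ((g i).1 + (g i).2) := by
  set a := (g j).1 with ha
  set lam := (g j).2 with hlam
  set μ := r * lam with hμ
  have hμpos : 0 < μ := mul_pos (by linarith) (hpos j)
  have hcard : (Finset.univ.erase j).card = N - 1 := by
    rw [Finset.card_erase_of_mem (Finset.mem_univ j), Finset.card_univ, Fintype.card_fin]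
  have hone' : ∀ i, (g i).1 ≤ 1 := fun i => by have := hone i; have := hpos i; linarith
  have hA : (0:ℝ) ≤ ∏ i ∈ Finset.univ.erase j, (g i).1 :=
    Finset.prod_nonneg (fun i _ => by have := hhalf i; linarith)
  have hB : (∏ i ∈ Finset.univ.erase j, (g i).1) * (1+μ)^(N-1)
      ≤ ∏ i ∈ Finset.univ.erase j, ((g i).1 + (g i).2) := by
    calc (∏ i ∈ Finset.univ.erase j, (g i).1) * (1+μ)^(N-1)
        = ∏ i ∈ Finset.univ.erase j, ((g i).1 * (1+μ)) := by
          rw [Finset.prod_mul_distrib, Finset.prod_const, hcard]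
      _ ≤ ∏ i ∈ Finset.univ.erase j, ((g i).1 + (g i).2) := by
          refine Finset.prod_le_prod (fun i _ => by nlinarith [hhalf i]) (fun i hi => ?_)
          have hij : i ≠ j := Finset.ne_of_mem_erase hi
          have := hlw i hij
          nlinarith [hone' i, hhalf i]
  have hBern : 1 + ((N:ℝ)-1) * μ ≤ (1+μ)^(N-1) := by
    have := one_add_mul_le_pow (a := μ) (by linarith) (N-1)
    have hc : ((N - 1 : ℕ) : ℝ) = (N:ℝ) - 1 := by
      rw [Nat.cast_sub (by omega), Nat.cast_one]
    rwa [hc] at this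
  have hNr : (2:ℝ) ≤ (N:ℝ) - 1 := by
    have : (3:ℝ) ≤ (N:ℝ) := by exact_mod_cast hN
    linarith
  have hkey : a + (1 - r) * lam ≤ (a + r * lam) * (1 + ((N:ℝ)-1) * μ) := by
    have h1 : 1/2 ≤ a := hhalf j
    have h2 : 0 < lam := hpos j
    have e0 : (0:ℝ) ≤ ((N:ℝ)-1)*r - 2/3 := by nlinarith
    have e1 : (2:ℝ)/3 * lam ≤ ((N:ℝ)-1)*r*lam := by nlinarith [mul_nonneg e0 h2.le]
    have e2 : (1:ℝ)/2 * (2/3 * lam) ≤ a * (((N:ℝ)-1)*r*lam) :=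
      mul_le_mul h1 e1 (by linarith) (by linarith)
    have e3 : (0:ℝ) ≤ (r - 1/3) * lam := mul_nonneg (by linarith) h2.le
    have e4 : (0:ℝ) ≤ r * lam * (((N:ℝ)-1) * μ) :=
      mul_nonneg (by nlinarith) (by nlinarith [hμpos.le])
    nlinarith [e2, e3, e4]
  calc (a + (1 - r) * lam) * ∏ i ∈ Finset.univ.erase j, (g i).1
      ≤ ((a + r * lam) * (1 + ((N:ℝ)-1) * μ)) * ∏ i ∈ Finset.univ.erase j, (g i).1 :=
        mul_le_mul_of_nonneg_right hkey hA
    _ = (a + r * lam) * ((∏ i ∈ Finset.univ.erase j, (g i).1) * (1 + ((N:ℝ)-1) * μ)) := by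
        ring
    _ ≤ (a + r * lam) * ∏ i ∈ Finset.univ.erase j, ((g i).1 + (g i).2) := by
        refine mul_le_mul_of_nonneg_left ?_ (by nlinarith [hhalf j, hpos j])
        calc (∏ i ∈ Finset.univ.erase j, (g i).1) * (1 + ((N:ℝ)-1) * μ)
            ≤ (∏ i ∈ Finset.univ.erase j, (g i).1) * (1+μ)^(N-1) :=
              mul_le_mul_of_nonneg_left hBern hA
          _ ≤ _ := hB

lemma prod_split {N : ℕ} (j : Fin N) (h : Fin N → ℝ) :
    ∏ i, h i = h j * ∏ i ∈ Finset.univ.erase j, h i :=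
  (Finset.mul_prod_erase _ _ (Finset.mem_univ j)).symm

lemma inv_updStep {α x : ℝ} (h0 : 0 < α) (h13 : α ≤ 1/3) {N : ℕ} (hN : 3 ≤ N)
    (g : Fin N → ℝ × ℝ) (j : Fin N) (hg : CInv α x g)
    (hlw : ∀ i, i ≠ j → ((1-α)/2) * (g j).2 ≤ (g i).2) :
    CInv α x (updStep ((1-α)/2) x g j) ∧
    (updStep ((1-α)/2) x g j j).2 = ((1-α)/2) * (g j).2 ∧
    (∀ i, i ≠ j → updStep ((1-α)/2) x g j i = g i) := by
  classical
  obtain ⟨hhalf, hone, hpos, hlo, hhi, hmem⟩ := hg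
  have h1 : α ≤ 1 := by linarith
  set r := (1-α)/2 with hr
  have hr1 : 1/3 ≤ r := by rw [hr]; linarith
  have hr2 : r ≤ 1/2 := by rw [hr]; linarith
  set g' := updStep r x g j with hg'
  have hoff : ∀ i, i ≠ j → g' i = g i := by
    intro i hij
    rw [hg', updStep]
    split <;> exact Function.update_of_ne hij _ _
  have hfst : ∀ i, (g' i).1 = (g i).1 ∨ (g' i).1 = (g i).1 + (1-r) * (g i).2 := by
    intro i
    by_cases hij : i = j
    · subst hij
      rw [hg', updStep]
      split <;> simp [Function.update_self]
    · rw [hoff i hij]; exact Or.inl rfl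
  have hsnd : (g' j).2 = r * (g j).2 := by
    rw [hg', updStep]; split <;> simp [Function.update_self]
  have hsum : ∀ i, (g' i).1 + (g' i).2 = (g i).1 + (g i).2 ∨
      ((g' i).1 = (g i).1 ∧ (g' i).2 = r * (g i).2) := by
    intro i
    by_cases hij : i = j
    · subst hij
      rw [hg', updStep]
      split
      · right; simp [Function.update_self]
      · left; simp [Function.update_self]; ring
    · left; rw [hoff i hij]
  refine ⟨⟨?_, ?_, ?_, ?_, ?_, ?_⟩, hsnd, hoff⟩
  · intro i
    rcases hfst i with h | h <;> rw [h]
    · exact hhalf i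
    · have := hpos i; nlinarith [hhalf i]
  · intro i
    by_cases hij : i = j
    · subst hij
      rw [hg', updStep]
      split <;> simp only [Function.update_self]
      · have := hpos i; have := hone i; nlinarith
      · have := hone i; nlinarith [hpos i]
    · rw [hoff i hij]; exact hone i
  · intro i
    by_cases hij : i = j
    · subst hij; rw [hsnd]; exact mul_pos (by linarith) (hpos i)
    · rw [hoff i hij]; exact hpos i
  · -- lower product bound
    rw [hg', updStep]
    split
    · -- digit 0 : first components unchanged
      refine le_trans (le_of_eq (Finset.prod_congr rfl fun i _ => ?_)) hlo
      by_cases hij : i = j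
      · subst hij; simp [Function.update_self]
      · rw [Function.update_of_ne hij]
    · rename_i hx0
      push_neg at hx0
      have hcov := cover_ineq hr1 hr2 hN g j hhalf hone hpos hlw
      calc ∏ i, (Function.update g j ((g j).1 + (1 - r) * (g j).2, r * (g j).2) i).1
          = ((g j).1 + (1 - r) * (g j).2) * ∏ i ∈ Finset.univ.erase j, (g i).1 := by
            rw [prod_split j]
            simp only [Function.update_self]
            congr 1
            exact Finset.prod_congr rfl fun i hi => by
              rw [Function.update_of_ne (Finset.ne_of_mem_erase hi)]
        _ ≤ ((g j).1 + r * (g j).2) * ∏ i ∈ Finset.univ.erase j, ((g i).1 + (g i).2) :=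
            hcov
        _ ≤ x := hx0.le
  · -- upper product bound
    rw [hg', updStep]
    split
    · rename_i hx0
      calc x ≤ ((g j).1 + r * (g j).2) * ∏ i ∈ Finset.univ.erase j, ((g i).1 + (g i).2) := hx0
        _ = ∏ i, ((Function.update g j ((g j).1, r * (g j).2) i).1
              + (Function.update g j ((g j).1, r * (g j).2) i).2) := by
            rw [prod_split j (fun i => (Function.update g j ((g j).1, r * (g j).2) i).1
              + (Function.update g j ((g j).1, r * (g j).2) i).2)]
            simp only [Function.update_self]
            congr 1
            exact Finset.prod_congr rfl fun i hi => by
              rw [Function.update_of_ne (Finset.ne_of_mem_erase hi)]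
    · refine le_trans hhi (le_of_eq (Finset.prod_congr rfl fun i _ => ?_).symm)
      by_cases hij : i = j
      · subst hij; simp only [Function.update_self]; ring
      · rw [Function.update_of_ne hij]
  · -- membership
    intro i c hc
    by_cases hij : i = j
    · subst hij
      rw [hg', updStep]
      split <;> simp only [Function.update_self]
      · have : (g i).1 + r * (g i).2 * c = (g i).1 + (g i).2 * (r * c) := by ring
        rw [this]
        exact hmem i _ (by simpa [hr] using cc_scale h0 h1 hc)
      · have : (g i).1 + (1 - r) * (g i).2 + r * (g i).2 * c
            = (g i).1 + (g i).2 * ((1 + α)/2 + r * c) := by rw [hr]; ring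
        rw [this]
        exact hmem i _ (by simpa [hr] using cc_shift h0 h1 hc)
    · rw [hoff i hij]
      exact hmem i c hc

lemma sweep_inv {α x : ℝ} (h0 : 0 < α) (h13 : α ≤ 1/3) {N : ℕ} (hN : 3 ≤ N)
    (g : Fin N → ℝ × ℝ) (Λ : ℝ) (hg : CInv α x g) (hΛ : ∀ i, (g i).2 = Λ) :
    ∀ j, j ≤ N → CInv α x (sweep ((1-α)/2) x g j) ∧
      (∀ i : Fin N, (sweep ((1-α)/2) x g j i).2
        = if i.val < j then ((1-α)/2) * Λ else Λ) := by
  have hΛpos : 0 < Λ := by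
    have := hg.2.2.1 ⟨0, by omega⟩
    rwa [hΛ] at this
  have hr1 : 1/3 ≤ (1-α)/2 := by linarith
  have hr2 : (1-α)/2 ≤ 1/2 := by linarith
  intro j
  induction j with
  | zero => intro _; exact ⟨hg, fun i => by simp [sweep, hΛ i]⟩
  | succ j ih =>
      intro hj1
      have hj : j < N := by omega
      obtain ⟨hinv, hpat⟩ := ih (by omega)
      have hsw : sweep ((1-α)/2) x g (j+1)
          = updStep ((1-α)/2) x (sweep ((1-α)/2) x g j) ⟨j, hj⟩ := by
        rw [sweep, dif_pos hj]
      have hvj : ((⟨j, hj⟩ : Fin N) : ℕ) = j := rfl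
      have hpatj : (sweep ((1-α)/2) x g j ⟨j, hj⟩).2 = Λ := by
        rw [hpat ⟨j, hj⟩, hvj, if_neg (lt_irrefl j)]
      have hlw : ∀ i : Fin N, i ≠ ⟨j, hj⟩ →
          ((1-α)/2) * (sweep ((1-α)/2) x g j ⟨j, hj⟩).2 ≤ (sweep ((1-α)/2) x g j i).2 := by
        intro i hij
        rw [hpatj, hpat i]
        by_cases h : i.val < j
        · rw [if_pos h]
        · rw [if_neg h]; nlinarith
      obtain ⟨hinv', hsnd', hoff'⟩ := inv_updStep h0 h13 hN _ ⟨j, hj⟩ hinv hlw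
      rw [hsw]
      refine ⟨hinv', fun i => ?_⟩
      by_cases hij : i = ⟨j, hj⟩
      · subst hij
        rw [hsnd', hpatj, hvj, if_pos (Nat.lt_succ_self j)]
      · rw [hoff' i hij, hpat i]
        have hne : i.val ≠ j := fun h => hij (Fin.ext h)
        by_cases h : i.val < j
        · rw [if_pos h, if_pos (by omega)]
        · rw [if_neg h, if_neg (by omega)]

lemma evolve_inv {α x : ℝ} (h0 : 0 < α) (h13 : α ≤ 1/3) {N k : ℕ} (hN : 3 ≤ N) (hk : 0 < k)
    (hx1 : (1 - ((1-α)/2)^k)^N ≤ x) (hx2 : x ≤ 1) :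
    ∀ m, CInv α x (evolve ((1-α)/2) x (1 - ((1-α)/2)^k) N k m) ∧
      (∀ i : Fin N, (evolve ((1-α)/2) x (1 - ((1-α)/2)^k) N k m i).2 = ((1-α)/2)^(k+m)) := by
  have h1 : α ≤ 1 := by linarith
  have hr0 : (0:ℝ) ≤ (1-α)/2 := by linarith
  have hr1 : (1:ℝ)/3 ≤ (1-α)/2 := by linarith
  have hr2 : (1-α)/2 ≤ 1/2 := by linarith
  have hrk : ((1-α)/2)^k ≤ (1-α)/2 := by
    calc ((1-α)/2)^k ≤ ((1-α)/2)^1 := pow_le_pow_of_le_one hr0 (by linarith) hk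
      _ = (1-α)/2 := pow_one _
  have hθhalf : (1:ℝ)/2 ≤ 1 - ((1-α)/2)^k := by linarith
  intro m
  induction m with
  | zero =>
      constructor
      · refine ⟨fun i => hθhalf, fun i => by simp [evolve], fun i => ?_, ?_, ?_, fun i c hc => ?_⟩
        · simp only [evolve]
          exact pow_pos (by linarith) k
        · simp only [evolve, Finset.prod_const, Finset.card_univ, Fintype.card_fin]
          exact hx1
        · simp only [evolve, Finset.prod_const, Finset.card_univ, Fintype.card_fin]
          calc x ≤ 1 := hx2
            _ = 1^N := (one_pow N).symm
            _ ≤ (1 - ((1-α)/2)^k + ((1-α)/2)^k)^N := by norm_num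
        · simp only [evolve]
          exact cc_affine h0 h1 k hc
      · intro i; simp [evolve]
  | succ m ih =>
      obtain ⟨hinv, hpat⟩ := ih
      have := sweep_inv h0 h13 hN _ (((1-α)/2)^(k+m)) hinv hpat N le_rfl
      refine ⟨this.1, fun i => ?_⟩
      have := this.2 i
      rw [if_pos i.isLt] at this
      rw [show evolve ((1-α)/2) x (1 - ((1-α)/2)^k) N k (m+1)
        = sweep ((1-α)/2) x (evolve ((1-α)/2) x (1 - ((1-α)/2)^k) N k m) N from rfl]
      rw [this, show k + (m+1) = (k+m) + 1 from rfl, pow_succ]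
      ring

lemma prod_err {N : ℕ} (f : Fin N → ℝ) (lam : ℝ) (hlam : 0 ≤ lam)
    (hf : ∀ i, 1/2 ≤ f i) (hf1 : ∀ i, f i ≤ 1) :
    ∏ i, (f i + lam) ≤ (∏ i, f i) + ((1 + 2*lam)^N - 1) := by
  have h1 : ∏ i, (f i + lam) ≤ (∏ i, f i) * (1 + 2*lam)^N := by
    calc ∏ i, (f i + lam) ≤ ∏ i, (f i * (1 + 2*lam)) := by
          refine Finset.prod_le_prod (fun i _ => by nlinarith [hf i]) (fun i _ => by nlinarith [hf i])
      _ = (∏ i, f i) * (1 + 2*lam)^N := by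
          rw [Finset.prod_mul_distrib, Finset.prod_const, Finset.card_univ, Fintype.card_fin]
  have h2 : (∏ i, f i) ≤ 1 :=
    Finset.prod_le_one (fun i _ => by linarith [hf i]) (fun i _ => hf1 i)
  have h3 : (1:ℝ) ≤ (1 + 2*lam)^N := one_le_pow₀ (by linarith)
  nlinarith [Finset.prod_nonneg (fun i (_ : i ∈ Finset.univ) => by linarith [hf i] : ∀ i ∈ Finset.univ, (0:ℝ) ≤ f i)]

lemma key_lemma (α : ℝ) (h0 : 0 < α) (h13 : α ≤ 1/3) (k N : ℕ) (hk : 0 < k) (hN : 3 ≤ N)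
    (x : ℝ) (hx1 : (1 - ((1-α)/2)^k)^N ≤ x) (hx2 : x ≤ 1) :
    ∃ c : Fin N → ℝ, (∀ i, c i ∈ centralCantor α) ∧ x = ∏ i, c i := by
  have h1 : α ≤ 1 := by linarith
  have hr0 : (0:ℝ) ≤ (1-α)/2 := by linarith
  have hr1 : (1-α)/2 < 1 := by linarith
  obtain hEV := evolve_inv h0 h13 hN hk hx1 hx2
  set r := (1-α)/2 with hr
  set S := evolve r x (1 - r^k) N k with hS
  -- the closed set of N-fold products
  set K := (fun c : Fin N → ℝ => ∏ i, c i) '' (Set.pi Set.univ fun _ : Fin N => centralCantor α)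
    with hK
  have hKcompact : IsCompact K := by
    refine IsCompact.image (isCompact_univ_pi fun i => cc_isCompact h0 h1) ?_
    exact continuous_finset_prod _ (fun i _ => continuous_apply i)
  have hKclosed : IsClosed K := hKcompact.isClosed
  -- the approximating products
  set p : ℕ → ℝ := fun m => ∏ i, (S m i).1 with hp
  have hmemp : ∀ m, p m ∈ K := by
    intro m
    refine ⟨fun i => (S m i).1, fun i _ => ?_, rfl⟩
    have := (hEV m).1.2.2.2.2.2 i 0 (cc_zero_mem h0 h1)
    simpa using this
  have hbound : ∀ m, 0 ≤ x - p m ∧ x - p m ≤ (1 + 2*r^(k+m))^N - 1 := by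
    intro m
    obtain ⟨⟨hhalf, hone, hpos, hlo, hhi, _⟩, hpat⟩ := hEV m
    constructor
    · linarith [hlo]
    · have hupper : x ≤ ∏ i, ((S m i).1 + r^(k+m)) := by
        refine le_trans hhi (le_of_eq (Finset.prod_congr rfl fun i _ => ?_))
        rw [hpat i]
      have := prod_err (fun i => (S m i).1) (r^(k+m)) (pow_nonneg hr0 _)
        (fun i => hhalf i) (fun i => by have := hone i; have := hpos i; linarith)
      simp only [hp]
      linarith
  have hE : Tendsto (fun m => (1 + 2*r^(k+m))^N - 1) atTop (nhds 0) := by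
    have h1' : Tendsto (fun m : ℕ => r^(k+m)) atTop (nhds 0) := by
      have := tendsto_pow_atTop_nhds_zero_of_lt_one hr0 hr1
      have h2' : Tendsto (fun m : ℕ => r^k * r^m) atTop (nhds (r^k * 0)) :=
        this.const_mul (r^k)
      simpa [pow_add] using h2'
    have hc : Continuous (fun y : ℝ => (1 + 2*y)^N - 1) := by continuity
    have := (hc.tendsto 0).comp h1'
    simpa [Function.comp_def] using this
  have hptend : Tendsto p atTop (nhds x) := by
    have h1' : Tendsto (fun m => x - p m) atTop (nhds 0) :=
      tendsto_of_tendsto_of_tendsto_of_le_of_le tendsto_const_nhds hE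
        (fun m => (hbound m).1) (fun m => (hbound m).2)
    have := tendsto_const_nhds.sub h1' (α := ℕ) (f := fun _ => x)
    simpa using this
  have hxK : x ∈ K := hKclosed.mem_of_tendsto hptend (Filter.Eventually.of_forall hmemp)
  obtain ⟨c, hc, hcx⟩ := hxK
  exact ⟨c, fun i => hc i (Set.mem_univ i), hcx.symm⟩

end Construction

/-- Theorem 5 (case `α ≤ 1/3`): the interval `[θ^{t+1}, θ^{t−1}]`, with
`θ = 1 − ((1−α)/2)^k`, consists of products of `2t` elements of `C_α`. -/
theorem products_interval_thin (α : ℝ) (h0 : 0 < α) (h1 : α ≤ 1) (h13 : α ≤ 1 / 3)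
    (k t : ℕ) (hk : 0 < k) (ht : 0 < t)
    (hteq : t = ⌈1 / (1 - ((1 - α) / 2) ^ k) ^ (2 * t - 1)⌉₊) :
    Set.Icc ((1 - ((1 - α) / 2) ^ k) ^ (t + 1)) ((1 - ((1 - α) / 2) ^ k) ^ (t - 1))
      ⊆ {x : ℝ | ∃ c : Fin (2 * t) → ℝ, (∀ i, c i ∈ centralCantor α) ∧ x = ∏ i, c i} := by
  have hr0 : (0:ℝ) ≤ (1 - α)/2 := by linarith
  have hr1 : (1 - α)/2 < 1 := by linarith
  have hrpos : (0:ℝ) < (1 - α)/2 := by linarith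
  set θ : ℝ := 1 - ((1 - α) / 2) ^ k with hθ
  have hθ1 : θ < 1 := by
    have : (0:ℝ) < ((1 - α)/2)^k := pow_pos hrpos k
    simp only [hθ]; linarith
  have hθhalf : (1:ℝ)/2 ≤ θ := by
    have hrk : ((1-α)/2)^k ≤ (1-α)/2 := by
      calc ((1-α)/2)^k ≤ ((1-α)/2)^1 := pow_le_pow_of_le_one hr0 (by linarith) hk
        _ = (1-α)/2 := pow_one _
    simp only [hθ]; linarith
  have hθ0 : (0:ℝ) < θ := lt_of_lt_of_le (by norm_num) hθhalf
  -- t ≥ 2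
  have ht2 : 2 ≤ t := by
    by_contra h
    have ht1 : t = 1 := by omega
    rw [ht1] at hteq
    have hpow : θ ^ (2 * 1 - 1) < 1 := by
      simpa using hθ1
    have hpowpos : (0:ℝ) < θ ^ (2 * 1 - 1) := pow_pos hθ0 _
    have hgt : (1:ℝ) < 1 / θ ^ (2 * 1 - 1) := by
      rw [lt_div_iff₀ hpowpos]; linarith
    have := Nat.le_ceil (1 / θ ^ (2 * 1 - 1))
    rw [← hteq] at this
    push_cast at this
    linarith
  intro x hx
  obtain ⟨hxl, hxr⟩ := hx
  have hN : 3 ≤ 2 * t := by omega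
  have hx1 : θ ^ (2 * t) ≤ x := by
    refine le_trans ?_ hxl
    exact pow_le_pow_of_le_one hθ0.le hθ1.le (by omega)
  have hx2 : x ≤ 1 := by
    refine le_trans hxr ?_
    exact pow_le_one₀ hθ0.le hθ1.le
  exact key_lemma α h0 h13 k (2 * t) hk hN x hx1 hx2
end

section
/- Let α ∈ (1/3, 1), and let k, t, s, p be positive integers with t = s + p, s = ⌈ 1 / (1 − ((1−α)/2)^k)^{2t−1} ⌉, and p = ⌈ ((3α−1)/2) / ( (1 − ((1−α)/2)^k)^{2t−1} · ((1−α²)/4) ) ⌉. Set θ = 1 − ((1−α)/2)^k. Then the closed interval [θ^{t+1}, θ^{t−1}] is contained in the set Γ = { Π_{i=1}^{2t} c_i : c_i ∈ C_α }. -/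
open scoped BigOperators

/-- level counter: number of digit-steps factor `j` has undergone by time `r`
(round-robin schedule). -/
def gL (m r : ℕ) (j : Fin m) : ℕ := r / m + if (j : ℕ) < r % m then 1 else 0

open Classical in
/-- The greedy construction. -/
noncomputable def gA (β μ x : ℝ) (m : ℕ) (hm : 0 < m) : ℕ → Fin m → ℝ
  | 0 => fun _ => 1 - μ
  | (r+1) =>
    let a := gA β μ x m hm r
    let i : Fin m := ⟨r % m, Nat.mod_lt r hm⟩
    if x ≤ (a i + μ * β ^ (r / m + 1)) *
        ∏ l ∈ Finset.univ.erase i, (a l + μ * β ^ gL m r l)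
    then a
    else fun j => if j = i then a j + (1 - β) * μ * β ^ (r / m) else a j

lemma gL_zero (m : ℕ) (j : Fin m) : gL m 0 j = 0 := by simp [gL]

lemma gL_idx (m r : ℕ) (hm : 0 < m) : gL m r ⟨r % m, Nat.mod_lt r hm⟩ = r / m := by
  simp [gL]

lemma gL_lb (m r : ℕ) (j : Fin m) : r / m ≤ gL m r j := Nat.le_add_right _ _

lemma gL_ub (m r : ℕ) (j : Fin m) : gL m r j ≤ r / m + 1 := by
  unfold gL; split <;> omega

lemma gL_succ (m r : ℕ) (hm : 0 < m) (j : Fin m) :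
    gL m (r+1) j = gL m r j + (if j = (⟨r % m, Nat.mod_lt r hm⟩ : Fin m) then 1 else 0) := by
  have hjm := j.isLt
  have he : r % m < m := Nat.mod_lt r hm
  have hji : (j = (⟨r % m, Nat.mod_lt r hm⟩ : Fin m)) ↔ ((j : ℕ) = r % m) := by
    constructor
    · intro h; rw [h]
    · intro h; exact Fin.ext h
  by_cases hcase : r % m + 1 < m
  · have hdm : (r+1) / m = r / m ∧ (r+1) % m = r % m + 1 := by
      rw [Nat.div_mod_unique hm]
      constructor
      · have := Nat.div_add_mod r m; omega
      · exact hcase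
    unfold gL
    rw [hdm.1, hdm.2]
    rcases eq_or_ne (j : ℕ) (r % m) with h | h
    · simp [hji, h]
    · simp only [hji, h, if_neg h, if_neg (by exact h)]
      have : ((j:ℕ) < r % m + 1) ↔ ((j:ℕ) < r % m) := by omega
      simp [this]
  · have hm1 : r % m + 1 = m := by omega
    have hdm : (r+1) / m = r / m + 1 ∧ (r+1) % m = 0 := by
      rw [Nat.div_mod_unique hm]
      constructor
      · have h1 := Nat.div_add_mod r m; rw [Nat.mul_succ]; omega
      · omega
    unfold gL
    rw [hdm.1, hdm.2]
    rcases eq_or_ne (j : ℕ) (r % m) with h | h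
    · simp [hji, h]
    · have hlt : (j:ℕ) < r % m := by omega
      simp [hji, h, hlt]

lemma prod_add_ge {ι : Type*} [DecidableEq ι] (s : Finset ι) (f g : ι → ℝ)
    (hf : ∀ j ∈ s, 0 ≤ f j) (hg : ∀ j ∈ s, 0 ≤ g j) :
    ∏ j ∈ s, f j + ∑ j ∈ s, g j * ∏ l ∈ s.erase j, f l ≤ ∏ j ∈ s, (f j + g j) := by
  induction s using Finset.induction_on with
  | empty => simp
  | @insert a s ha ih =>
    have hfa : 0 ≤ f a := hf a (Finset.mem_insert_self a s)
    have hga : 0 ≤ g a := hg a (Finset.mem_insert_self a s)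
    have hf' : ∀ j ∈ s, 0 ≤ f j := fun j hj => hf j (Finset.mem_insert_of_mem hj)
    have hg' : ∀ j ∈ s, 0 ≤ g j := fun j hj => hg j (Finset.mem_insert_of_mem hj)
    have ih' := ih hf' hg'
    rw [Finset.prod_insert ha, Finset.prod_insert ha, Finset.sum_insert ha]
    have he : (insert a s).erase a = s := Finset.erase_insert ha
    have hterm : ∀ j ∈ s, (insert a s).erase j = insert a (s.erase j) := by
      intro j hj
      rw [Finset.erase_insert_of_ne]
      intro h; exact ha (h ▸ hj)
    have hsum : ∑ j ∈ s, g j * ∏ l ∈ (insert a s).erase j, f l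
        = ∑ j ∈ s, g j * (f a * ∏ l ∈ s.erase j, f l) := by
      apply Finset.sum_congr rfl
      intro j hj
      rw [hterm j hj, Finset.prod_insert (fun h => ha (Finset.mem_of_mem_erase h))]
    rw [he, hsum]
    have hPf : 0 ≤ ∏ j ∈ s, f j := Finset.prod_nonneg hf'
    have hPfg : ∏ j ∈ s, f j + ∑ j ∈ s, g j * ∏ l ∈ s.erase j, f l ≤ ∏ j ∈ s, (f j + g j) := ih'
    have hsnn : 0 ≤ ∑ j ∈ s, g j * ∏ l ∈ s.erase j, f l := by
      apply Finset.sum_nonneg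
      intro j hj
      exact mul_nonneg (hg' j hj) (Finset.prod_nonneg fun l hl => hf' l (Finset.mem_of_mem_erase hl))
    have hs2 : ∑ j ∈ s, g j * (f a * ∏ l ∈ s.erase j, f l)
        = f a * ∑ j ∈ s, g j * ∏ l ∈ s.erase j, f l := by
      rw [Finset.mul_sum]; exact Finset.sum_congr rfl (fun j hj => by ring)
    calc f a * ∏ j ∈ s, f j + (g a * ∏ l ∈ s, f l + ∑ j ∈ s, g j * (f a * ∏ l ∈ s.erase j, f l))
        = (f a + g a) * ∏ j ∈ s, f j + f a * ∑ j ∈ s, g j * ∏ l ∈ s.erase j, f l := by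
          rw [hs2]; ring
      _ ≤ (f a + g a) * ∏ j ∈ s, f j + (f a + g a) * ∑ j ∈ s, g j * ∏ l ∈ s.erase j, f l := by
          apply add_le_add_right
          exact mul_le_mul_of_nonneg_right (le_add_of_nonneg_right hga) hsnn
      _ = (f a + g a) * (∏ j ∈ s, f j + ∑ j ∈ s, g j * ∏ l ∈ s.erase j, f l) := by ring
      _ ≤ (f a + g a) * ∏ j ∈ s, (f j + g j) :=
          mul_le_mul_of_nonneg_left ih' (by positivity)

lemma prod_add_le {ι : Type*} [DecidableEq ι] (s : Finset ι) (f g : ι → ℝ)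
    (hf : ∀ j ∈ s, 0 ≤ f j) (hg : ∀ j ∈ s, 0 ≤ g j) (hfg : ∀ j ∈ s, f j + g j ≤ 1) :
    ∏ j ∈ s, (f j + g j) ≤ ∏ j ∈ s, f j + ∑ j ∈ s, g j := by
  induction s using Finset.induction_on with
  | empty => simp
  | @insert a s ha ih =>
    have hfa : 0 ≤ f a := hf a (Finset.mem_insert_self a s)
    have hga : 0 ≤ g a := hg a (Finset.mem_insert_self a s)
    have hfga : f a + g a ≤ 1 := hfg a (Finset.mem_insert_self a s)
    have hf' : ∀ j ∈ s, 0 ≤ f j := fun j hj => hf j (Finset.mem_insert_of_mem hj)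
    have hg' : ∀ j ∈ s, 0 ≤ g j := fun j hj => hg j (Finset.mem_insert_of_mem hj)
    have hfg' : ∀ j ∈ s, f j + g j ≤ 1 := fun j hj => hfg j (Finset.mem_insert_of_mem hj)
    have ih' := ih hf' hg' hfg'
    rw [Finset.prod_insert ha, Finset.prod_insert ha, Finset.sum_insert ha]
    have hPf1 : ∏ j ∈ s, f j ≤ 1 :=
      Finset.prod_le_one hf' (fun j hj => by have := hfg' j hj; have := hg' j hj; linarith)
    have hsnn : 0 ≤ ∑ j ∈ s, g j := Finset.sum_nonneg hg'
    have hPnn : 0 ≤ ∏ j ∈ s, (f j + g j) :=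
      Finset.prod_nonneg fun j hj => add_nonneg (hf' j hj) (hg' j hj)
    calc (f a + g a) * ∏ j ∈ s, (f j + g j)
        ≤ (f a + g a) * (∏ j ∈ s, f j + ∑ j ∈ s, g j) :=
          mul_le_mul_of_nonneg_left ih' (by positivity)
      _ = f a * ∏ j ∈ s, f j + (f a + g a) * ∑ j ∈ s, g j + g a * ∏ j ∈ s, f j := by ring
      _ ≤ f a * ∏ j ∈ s, f j + 1 * ∑ j ∈ s, g j + g a * 1 := by
          gcongr
      _ = f a * ∏ j ∈ s, f j + (g a + ∑ j ∈ s, g j) := by ring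

section digits

variable {β : ℝ} {ε : ℕ → ℝ}

lemma digit_nonneg (hε : ∀ n, ε n = 0 ∨ ε n = 1) (n : ℕ) : 0 ≤ ε n := by
  rcases hε n with h | h <;> simp [h]

lemma digit_le_one (hε : ∀ n, ε n = 0 ∨ ε n = 1) (n : ℕ) : ε n ≤ 1 := by
  rcases hε n with h | h <;> simp [h]

lemma digit_summable (hβ0 : 0 ≤ β) (hβ1 : β < 1) (hε : ∀ n, ε n = 0 ∨ ε n = 1) :
    Summable (fun n => ε n * ((1 - β) * β ^ n)) := by
  have h1β : (0:ℝ) ≤ 1 - β := by linarith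
  apply Summable.of_nonneg_of_le
    (fun n => mul_nonneg (digit_nonneg hε n) (mul_nonneg h1β (pow_nonneg hβ0 n)))
    (fun n => ?_)
    (((summable_geometric_of_lt_one hβ0 hβ1)).mul_left (1 - β))
  calc ε n * ((1 - β) * β ^ n) ≤ 1 * ((1 - β) * β ^ n) :=
        mul_le_mul_of_nonneg_right (digit_le_one hε n) (mul_nonneg h1β (pow_nonneg hβ0 n))
    _ = (1 - β) * β ^ n := by ring

lemma digit_tail_bounds (hβ0 : 0 ≤ β) (hβ1 : β < 1) (hε : ∀ n, ε n = 0 ∨ ε n = 1) (L : ℕ) :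
    ∑ n ∈ Finset.range L, ε n * ((1 - β) * β ^ n) ≤ ∑' n, ε n * ((1 - β) * β ^ n) ∧
    ∑' n, ε n * ((1 - β) * β ^ n)
      ≤ ∑ n ∈ Finset.range L, ε n * ((1 - β) * β ^ n) + β ^ L := by
  have h1β : (0:ℝ) ≤ 1 - β := by linarith
  have hne : (1:ℝ) - β ≠ 0 := by linarith
  have hsum := digit_summable hβ0 hβ1 hε
  have hsplit := Summable.sum_add_tsum_nat_add (f := fun n => ε n * ((1 - β) * β ^ n)) L hsum
  have htail_sum : Summable (fun n : ℕ => ε (n + L) * ((1 - β) * β ^ (n + L))) :=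
    (summable_nat_add_iff L).2 hsum
  have htail_nn : 0 ≤ ∑' n : ℕ, ε (n + L) * ((1 - β) * β ^ (n + L)) :=
    tsum_nonneg fun n => mul_nonneg (digit_nonneg hε _)
      (mul_nonneg h1β (pow_nonneg hβ0 _))
  have htail_ub : ∑' n : ℕ, ε (n + L) * ((1 - β) * β ^ (n + L)) ≤ β ^ L := by
    have h1 : ∀ n : ℕ, ε (n + L) * ((1 - β) * β ^ (n + L)) ≤ ((1 - β) * β ^ L) * β ^ n := by
      intro n
      have he : (1 - β) * β ^ (n + L) = ((1 - β) * β ^ L) * β ^ n := by rw [pow_add]; ring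
      rw [he]
      nth_rewrite 2 [show ((1 - β) * β ^ L) * β ^ n = 1 * (((1 - β) * β ^ L) * β ^ n) by ring]
      exact mul_le_mul_of_nonneg_right (digit_le_one hε _)
        (mul_nonneg (mul_nonneg h1β (pow_nonneg hβ0 L)) (pow_nonneg hβ0 n))
    have h2 : Summable (fun n : ℕ => ((1 - β) * β ^ L) * β ^ n) :=
      ((summable_geometric_of_lt_one hβ0 hβ1)).mul_left _
    calc ∑' n : ℕ, ε (n + L) * ((1 - β) * β ^ (n + L))
        ≤ ∑' n : ℕ, ((1 - β) * β ^ L) * β ^ n := Summable.tsum_le_tsum h1 htail_sum h2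
      _ = ((1 - β) * β ^ L) * (1 - β)⁻¹ := by
          rw [tsum_mul_left, tsum_geometric_of_lt_one hβ0 hβ1]
      _ = β ^ L := by
          rw [mul_comm (1 - β) (β ^ L), mul_assoc, mul_inv_cancel₀ hne, mul_one]
  constructor
  · linarith [hsplit, htail_nn]
  · linarith [hsplit, htail_ub]

lemma digit_tsum_nonneg (hβ0 : 0 ≤ β) (hβ1 : β < 1) (hε : ∀ n, ε n = 0 ∨ ε n = 1) :
    0 ≤ ∑' n, ε n * ((1 - β) * β ^ n) :=
  tsum_nonneg fun n => mul_nonneg (digit_nonneg hε _)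
    (mul_nonneg (by linarith) (pow_nonneg hβ0 _))

end digits

section core

variable {β μ : ℝ} {m : ℕ}

/-- The key overlap inequality: the "option 1 minimum" is at most the
"option 0 maximum" of the greedy step. -/
lemma star_ineq (hm : 0 < m) (hβ0 : 0 < β) (hβ1 : β < 1) (hμ0 : 0 < μ) (hμ1 : μ < 1)
    (hkey : 1 - β ≤ (1 - μ) ^ (m - 1) * (m * β))
    (a : Fin m → ℝ) (Lv : Fin m → ℕ) (i : Fin m) (n : ℕ)
    (ha1 : ∀ j, 1 - μ ≤ a j) (ha2 : ∀ j, a j + μ * β ^ Lv j ≤ 1)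
    (hLub : ∀ j, Lv j ≤ n + 1) :
    (a i + (1 - β) * μ * β ^ n) * ∏ j ∈ Finset.univ.erase i, a j
      ≤ (a i + μ * β ^ (n + 1)) * ∏ j ∈ Finset.univ.erase i, (a j + μ * β ^ Lv j) := by
  classical
  set s := Finset.univ.erase i with hs
  have hθ0 : (0:ℝ) ≤ 1 - μ := by linarith
  have ha0 : ∀ j, 0 ≤ a j := fun j => le_trans hθ0 (ha1 j)
  have hg0 : ∀ j, (0:ℝ) ≤ μ * β ^ Lv j := fun j => by positivity
  have haub : ∀ j, a j ≤ 1 := fun j => by have := ha2 j; have := hg0 j; linarith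
  have hcard : s.card = m - 1 := by
    rw [hs, Finset.card_erase_of_mem (Finset.mem_univ i), Finset.card_univ, Fintype.card_fin]
  -- lower bound for products of a's
  have hP_lb : (1 - μ) ^ (m - 1) ≤ ∏ j ∈ s, a j := by
    calc (1 - μ) ^ (m - 1) = ∏ _j ∈ s, (1 - μ) := by rw [Finset.prod_const, hcard]
      _ ≤ ∏ j ∈ s, a j := Finset.prod_le_prod (fun _ _ => hθ0) (fun j _ => ha1 j)
  have hP_ub : ∏ j ∈ s, a j ≤ 1 :=
    Finset.prod_le_one (fun j _ => ha0 j) (fun j _ => haub j)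
  have hP_nn : 0 ≤ ∏ j ∈ s, a j := Finset.prod_nonneg fun j _ => ha0 j
  -- per-term lower bound for a i * ∏_{s.erase j} a
  have hQ : ∀ j ∈ s, (1 - μ) ^ (m - 1) ≤ a i * ∏ l ∈ s.erase j, a l := by
    intro j hj
    have hm2 : 2 ≤ m := by
      have hji : j ≠ i := Finset.ne_of_mem_erase hj
      have h1 := j.isLt; have h2 := i.isLt
      by_contra h
      have hm1 : m = 1 := by omega
      subst hm1
      exact hji (Fin.ext (by omega))
    have hcard2 : (s.erase j).card = m - 2 := by
      rw [Finset.card_erase_of_mem hj, hcard]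
      omega
    have h1 : (1 - μ) ^ (m - 2) ≤ ∏ l ∈ s.erase j, a l := by
      calc (1 - μ) ^ (m - 2) = ∏ _l ∈ s.erase j, (1 - μ) := by rw [Finset.prod_const, hcard2]
        _ ≤ _ := Finset.prod_le_prod (fun _ _ => hθ0) (fun l _ => ha1 l)
    calc (1 - μ) ^ (m - 1) = (1 - μ) * (1 - μ) ^ (m - 2) := by
          rw [← pow_succ']; congr 1; omega
      _ ≤ a i * ∏ l ∈ s.erase j, a l := by
          apply mul_le_mul (ha1 i) h1 (by positivity) (ha0 i)
  -- superadditivity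
  have hsuper := prod_add_ge s a (fun j => μ * β ^ Lv j)
      (fun j _ => ha0 j) (fun j _ => hg0 j)
  -- each summand bound
  have hsum_lb : ((m:ℝ) - 1) * (μ * β ^ (n + 1) * (1 - μ) ^ (m - 1))
      ≤ a i * ∑ j ∈ s, (μ * β ^ Lv j) * ∏ l ∈ s.erase j, a l := by
    rw [Finset.mul_sum]
    calc ((m:ℝ) - 1) * (μ * β ^ (n + 1) * (1 - μ) ^ (m - 1))
        = ∑ _j ∈ s, μ * β ^ (n + 1) * (1 - μ) ^ (m - 1) := by
          rw [Finset.sum_const, hcard, nsmul_eq_mul]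
          congr 1
          have : (1:ℝ) ≤ m := by exact_mod_cast hm
          rw [Nat.cast_sub hm]; simp
      _ ≤ ∑ j ∈ s, a i * ((μ * β ^ Lv j) * ∏ l ∈ s.erase j, a l) := by
          apply Finset.sum_le_sum
          intro j hj
          have hβpow : β ^ (n + 1) ≤ β ^ Lv j :=
            pow_le_pow_of_le_one (le_of_lt hβ0) (le_of_lt hβ1) (hLub j)
          calc μ * β ^ (n + 1) * (1 - μ) ^ (m - 1)
              ≤ μ * β ^ Lv j * (a i * ∏ l ∈ s.erase j, a l) := by
                apply mul_le_mul (by nlinarith) (hQ j hj) (by positivity) (by positivity)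
            _ = a i * ((μ * β ^ Lv j) * ∏ l ∈ s.erase j, a l) := by ring
  -- the sum itself is nonnegative
  have hsum_nn : 0 ≤ ∑ j ∈ s, (μ * β ^ Lv j) * ∏ l ∈ s.erase j, a l :=
    Finset.sum_nonneg fun j hj => mul_nonneg (hg0 j)
      (Finset.prod_nonneg fun l _ => ha0 l)
  have hkey' : (1 - β) * (μ * β ^ n) ≤ (m:ℝ) * (μ * β ^ (n + 1) * (1 - μ) ^ (m - 1)) := by
    have h := mul_le_mul_of_nonneg_right hkey (show (0:ℝ) ≤ μ * β ^ n by positivity)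
    calc (1 - β) * (μ * β ^ n) ≤ (1 - μ) ^ (m - 1) * (m * β) * (μ * β ^ n) := h
      _ = (m:ℝ) * (μ * β ^ (n + 1) * (1 - μ) ^ (m - 1)) := by rw [pow_succ]; ring
  -- put everything together
  have hR_lb : ∏ j ∈ s, a j + ∑ j ∈ s, (μ * β ^ Lv j) * ∏ l ∈ s.erase j, a l
      ≤ ∏ j ∈ s, (a j + μ * β ^ Lv j) := hsuper
  have hai0 : 0 ≤ a i := ha0 i
  calc (a i + (1 - β) * μ * β ^ n) * ∏ j ∈ s, a j
      = a i * ∏ j ∈ s, a j + (1 - β) * μ * β ^ n * ∏ j ∈ s, a j := by ring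
    _ ≤ a i * ∏ j ∈ s, a j + (1 - β) * (μ * β ^ n) := by
        have hc : (0:ℝ) ≤ (1 - β) * μ * β ^ n :=
          mul_nonneg (mul_nonneg (by linarith) (le_of_lt hμ0)) (pow_nonneg (le_of_lt hβ0) n)
        have h := mul_le_mul_of_nonneg_left hP_ub hc
        nlinarith [h]
    _ ≤ a i * ∏ j ∈ s, a j + (m:ℝ) * (μ * β ^ (n + 1) * (1 - μ) ^ (m - 1)) := by
        linarith [hkey']
    _ = a i * ∏ j ∈ s, a j + ((m:ℝ) - 1) * (μ * β ^ (n + 1) * (1 - μ) ^ (m - 1))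
        + μ * β ^ (n + 1) * (1 - μ) ^ (m - 1) := by ring
    _ ≤ a i * ∏ j ∈ s, a j + a i * ∑ j ∈ s, (μ * β ^ Lv j) * ∏ l ∈ s.erase j, a l
        + μ * β ^ (n + 1) * ∏ j ∈ s, a j := by
        have h1 : μ * β ^ (n + 1) * (1 - μ) ^ (m - 1) ≤ μ * β ^ (n + 1) * ∏ j ∈ s, a j :=
          mul_le_mul_of_nonneg_left hP_lb (by positivity)
        linarith [hsum_lb]
    _ = a i * (∏ j ∈ s, a j + ∑ j ∈ s, (μ * β ^ Lv j) * ∏ l ∈ s.erase j, a l)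
        + μ * β ^ (n + 1) * ∏ j ∈ s, a j := by ring
    _ ≤ a i * ∏ j ∈ s, (a j + μ * β ^ Lv j) + μ * β ^ (n + 1) * ∏ j ∈ s, (a j + μ * β ^ Lv j) := by
        have h1 : a i * (∏ j ∈ s, a j + ∑ j ∈ s, (μ * β ^ Lv j) * ∏ l ∈ s.erase j, a l)
            ≤ a i * ∏ j ∈ s, (a j + μ * β ^ Lv j) := mul_le_mul_of_nonneg_left hR_lb hai0
        have h2 : μ * β ^ (n + 1) * ∏ j ∈ s, a j
            ≤ μ * β ^ (n + 1) * ∏ j ∈ s, (a j + μ * β ^ Lv j) := by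
          apply mul_le_mul_of_nonneg_left _ (by positivity)
          exact Finset.prod_le_prod (fun j _ => ha0 j) (fun j _ => by linarith [hg0 j])
        linarith
    _ = (a i + μ * β ^ (n + 1)) * ∏ j ∈ s, (a j + μ * β ^ Lv j) := by ring

end core

section core2

variable {β μ x : ℝ} {m : ℕ}

open Classical in
lemma gA_succ_eq (hm : 0 < m) (r : ℕ) :
    gA β μ x m hm (r+1) =
      if x ≤ (gA β μ x m hm r ⟨r % m, Nat.mod_lt r hm⟩ + μ * β ^ (r / m + 1)) *
          ∏ l ∈ Finset.univ.erase (⟨r % m, Nat.mod_lt r hm⟩ : Fin m),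
            (gA β μ x m hm r l + μ * β ^ gL m r l)
      then gA β μ x m hm r
      else fun j => if j = (⟨r % m, Nat.mod_lt r hm⟩ : Fin m) then
          gA β μ x m hm r j + (1 - β) * μ * β ^ (r / m) else gA β μ x m hm r j := by
  rfl

lemma gA_spec (hm : 0 < m) (hβ0 : 0 < β) (hβ1 : β < 1) (hμ0 : 0 < μ) (hμ1 : μ < 1)
    (hkey : 1 - β ≤ (1 - μ) ^ (m - 1) * ((m:ℝ) * β))
    (hx1 : (1 - μ) ^ m ≤ x) (hx2 : x ≤ 1) (r : ℕ) :
    (∀ j, 1 - μ ≤ gA β μ x m hm r j ∧ gA β μ x m hm r j + μ * β ^ gL m r j ≤ 1)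
    ∧ ∏ j, gA β μ x m hm r j ≤ x
    ∧ x ≤ ∏ j, (gA β μ x m hm r j + μ * β ^ gL m r j) := by
  induction r with
  | zero =>
    have h0 : ∀ j : Fin m, gA β μ x m hm 0 j = 1 - μ := fun j => rfl
    refine ⟨fun j => ?_, ?_, ?_⟩
    · rw [h0, gL_zero]
      exact ⟨le_refl _, by norm_num⟩
    · calc ∏ j : Fin m, gA β μ x m hm 0 j = (1 - μ) ^ m := by
            simp only [h0]; rw [Finset.prod_const, Finset.card_univ, Fintype.card_fin]
        _ ≤ x := hx1
    · calc x ≤ 1 := hx2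
        _ = ∏ j : Fin m, (gA β μ x m hm 0 j + μ * β ^ gL m 0 j) := by
            have hone : ∀ j : Fin m, gA β μ x m hm 0 j + μ * β ^ gL m 0 j = 1 := by
              intro j; rw [h0, gL_zero]; norm_num
            rw [Finset.prod_congr rfl (fun j _ => hone j), Finset.prod_const_one]
  | succ r ih =>
    obtain ⟨hbnd, hmin, hmax⟩ := ih
    set a := gA β μ x m hm r with ha
    set i : Fin m := ⟨r % m, Nat.mod_lt r hm⟩ with hi
    set n := r / m with hn
    have hLi : gL m r i = n := gL_idx m r hm
    have hLub : ∀ j, gL m r j ≤ n + 1 := fun j => gL_ub m r j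
    have hLsucc : ∀ j, gL m (r+1) j = gL m r j + (if j = i then 1 else 0) :=
      fun j => gL_succ m r hm j
    have hpow : β ^ (n + 1) ≤ β ^ n :=
      pow_le_pow_of_le_one (le_of_lt hβ0) (le_of_lt hβ1) (Nat.le_succ n)
    have hpow0 : (0:ℝ) ≤ μ * β ^ (n+1) := by positivity
    have hδ0 : (0:ℝ) ≤ (1 - β) * μ * β ^ n :=
      mul_nonneg (mul_nonneg (by linarith) (le_of_lt hμ0)) (pow_nonneg (le_of_lt hβ0) n)
    have hδsum : (1 - β) * μ * β ^ n + μ * β ^ (n+1) = μ * β ^ n := by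
      rw [pow_succ]; ring
    -- the "option 0 max"
    set M0 := (a i + μ * β ^ (n + 1)) *
        ∏ l ∈ Finset.univ.erase i, (a l + μ * β ^ gL m r l) with hM0
    have hsucc := gA_succ_eq (β := β) (μ := μ) (x := x) hm r
    by_cases hC : x ≤ M0
    · -- option 0 : nothing changes except the level of factor i
      have hstep : gA β μ x m hm (r+1) = a := by
        rw [hsucc, if_pos (by exact hC)]
      refine ⟨fun j => ?_, ?_, ?_⟩
      · rw [hstep]
        rcases eq_or_ne j i with hj | hj
        · subst hj
          have h2 := (hbnd i).2
          rw [hLi] at h2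
          rw [hLsucc, if_pos rfl, hLi]
          refine ⟨(hbnd i).1, ?_⟩
          have h3 := mul_le_mul_of_nonneg_left hpow (le_of_lt hμ0)
          linarith
        · rw [hLsucc, if_neg hj, Nat.add_zero]
          exact hbnd j
      · rw [hstep]; exact hmin
      · rw [hstep]
        calc x ≤ M0 := hC
          _ = ∏ j, (a j + μ * β ^ gL m (r+1) j) := by
            rw [hM0, ← Finset.mul_prod_erase Finset.univ
              (fun j => a j + μ * β ^ gL m (r+1) j) (Finset.mem_univ i)]
            congr 1
            · rw [hLsucc, if_pos rfl, hLi]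
            · apply Finset.prod_congr rfl
              intro l hl
              rw [hLsucc, if_neg (Finset.ne_of_mem_erase hl), Nat.add_zero]
    · -- option 1 : factor i gets digit 1
      have hstep : gA β μ x m hm (r+1) = fun j => if j = i then a j + (1 - β) * μ * β ^ n
          else a j := by
        rw [hsucc, if_neg (by exact hC)]
      have hstar := star_ineq hm hβ0 hβ1 hμ0 hμ1 hkey a (gL m r) i n
        (fun j => (hbnd j).1) (fun j => (hbnd j).2) hLub
      refine ⟨fun j => ?_, ?_, ?_⟩
      · rw [hstep]
        beta_reduce
        rcases eq_or_ne j i with hj | hj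
        · subst hj
          have h2 := (hbnd i).2
          rw [hLi] at h2
          rw [if_pos rfl, hLsucc, if_pos rfl, hLi]
          constructor
          · linarith [(hbnd i).1]
          · linarith [hδsum]
        · rw [if_neg hj, hLsucc, if_neg hj, Nat.add_zero]
          exact hbnd j
      · rw [hstep]
        have hPmin : ∏ j, (if j = i then a j + (1 - β) * μ * β ^ n else a j)
            = (a i + (1 - β) * μ * β ^ n) * ∏ l ∈ Finset.univ.erase i, a l := by
          rw [← Finset.mul_prod_erase Finset.univ _ (Finset.mem_univ i)]
          congr 1
          · rw [if_pos rfl]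
          · exact Finset.prod_congr rfl fun l hl => if_neg (Finset.ne_of_mem_erase hl)
        rw [hPmin]
        calc (a i + (1 - β) * μ * β ^ n) * ∏ l ∈ Finset.univ.erase i, a l
            ≤ M0 := hstar
          _ ≤ x := le_of_lt (lt_of_not_ge hC)
      · rw [hstep]
        have hPmax : ∏ j, ((if j = i then a j + (1 - β) * μ * β ^ n else a j)
              + μ * β ^ gL m (r+1) j)
            = (a i + μ * β ^ n) * ∏ l ∈ Finset.univ.erase i, (a l + μ * β ^ gL m r l) := by
          rw [← Finset.mul_prod_erase Finset.univ _ (Finset.mem_univ i)]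
          congr 1
          · rw [if_pos rfl, hLsucc, if_pos rfl, hLi]
            linarith [hδsum]
          · apply Finset.prod_congr rfl
            intro l hl
            rw [if_neg (Finset.ne_of_mem_erase hl), hLsucc,
              if_neg (Finset.ne_of_mem_erase hl), Nat.add_zero]
        rw [hPmax]
        calc x ≤ ∏ j, (a j + μ * β ^ gL m r j) := hmax
          _ = (a i + μ * β ^ n) * ∏ l ∈ Finset.univ.erase i, (a l + μ * β ^ gL m r l) := by
            rw [← Finset.mul_prod_erase Finset.univ
              (fun j => a j + μ * β ^ gL m r j) (Finset.mem_univ i), hLi]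

end core2

section core3

variable {β μ x : ℝ} {m : ℕ}

open Classical in
/-- the digit chosen for factor `j` at level `n` -/
noncomputable def gdig (β μ x : ℝ) (m : ℕ) (hm : 0 < m) (j : Fin m) (n : ℕ) : ℝ :=
  if gA β μ x m hm (m * n + (j:ℕ) + 1) j = gA β μ x m hm (m * n + (j:ℕ)) j then 0 else 1

lemma gdig_01 (hm : 0 < m) (j : Fin m) (n : ℕ) :
    gdig β μ x m hm j n = 0 ∨ gdig β μ x m hm j n = 1 := by
  unfold gdig; split <;> simp

lemma gA_step_eq (hm : 0 < m) (hβ0 : 0 < β) (hβ1 : β < 1) (hμ0 : 0 < μ) (r : ℕ) (j : Fin m) :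
    gA β μ x m hm (r+1) j = gA β μ x m hm r j +
      (if j = (⟨r % m, Nat.mod_lt r hm⟩ : Fin m) then
        gdig β μ x m hm j (r / m) * ((1 - β) * μ * β ^ (r / m)) else 0) := by
  rcases eq_or_ne j (⟨r % m, Nat.mod_lt r hm⟩ : Fin m) with hj | hj
  · rw [if_pos hj]
    have hr : m * (r / m) + (j:ℕ) = r := by
      have := Nat.div_add_mod r m
      rw [hj]
      exact this
    have hδpos : (0:ℝ) < (1 - β) * μ * β ^ (r / m) := by
      apply mul_pos (mul_pos (by linarith) hμ0) (pow_pos hβ0 _)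
    by_cases hC : x ≤ (gA β μ x m hm r ⟨r % m, Nat.mod_lt r hm⟩ + μ * β ^ (r / m + 1)) *
        ∏ l ∈ Finset.univ.erase (⟨r % m, Nat.mod_lt r hm⟩ : Fin m),
          (gA β μ x m hm r l + μ * β ^ gL m r l)
    · have hnc : gA β μ x m hm (r+1) j = gA β μ x m hm r j := by
        rw [gA_succ_eq hm r, if_pos hC]
      have hdig : gdig β μ x m hm j (r / m) = 0 := by
        unfold gdig
        rw [if_pos]
        rw [hr]
        exact hnc
      rw [hnc, hdig]; ring
    · have hch : gA β μ x m hm (r+1) j = gA β μ x m hm r j + (1 - β) * μ * β ^ (r / m) := by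
        rw [gA_succ_eq hm r, if_neg hC]
        beta_reduce
        rw [if_pos hj]
      have hdig : gdig β μ x m hm j (r / m) = 1 := by
        unfold gdig
        rw [if_neg]
        rw [hr, hch]
        intro habs
        nlinarith [hδpos]
      rw [hch, hdig]
      ring
  · rw [if_neg hj, gA_succ_eq hm r]
    split
    · ring
    · beta_reduce
      rw [if_neg hj]
      ring

lemma gA_partial_sum (hm : 0 < m) (hβ0 : 0 < β) (hβ1 : β < 1) (hμ0 : 0 < μ) (r : ℕ)
    (j : Fin m) :
    gA β μ x m hm r j = (1 - μ) + μ * ∑ n ∈ Finset.range (gL m r j),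
      gdig β μ x m hm j n * ((1 - β) * β ^ n) := by
  induction r with
  | zero => rw [gL_zero]; simp; rfl
  | succ r ih =>
    rw [gA_step_eq hm hβ0 hβ1 hμ0 r j, gL_succ m r hm j, ih]
    rcases eq_or_ne j (⟨r % m, Nat.mod_lt r hm⟩ : Fin m) with hj | hj
    · rw [if_pos hj, if_pos hj]
      have hLj : gL m r j = r / m := by rw [hj]; exact gL_idx m r hm
      rw [hLj, Finset.sum_range_succ, ← hLj]
      ring
    · rw [if_neg hj, if_neg hj, Nat.add_zero]
      ring

end core3

section core4

variable {β μ x : ℝ} {m : ℕ}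

lemma core_exists (hm : 0 < m) (hβ0 : 0 < β) (hβ1 : β < 1) (hμ0 : 0 < μ) (hμ1 : μ < 1)
    (hkey : 1 - β ≤ (1 - μ) ^ (m - 1) * ((m:ℝ) * β))
    (hx1 : (1 - μ) ^ m ≤ x) (hx2 : x ≤ 1) :
    ∃ ε : Fin m → ℕ → ℝ, (∀ i n, ε i n = 0 ∨ ε i n = 1) ∧
      x = ∏ i, (1 - μ + μ * ∑' n, ε i n * ((1 - β) * β ^ n)) := by
  classical
  set d := gdig β μ x m hm with hd
  refine ⟨d, fun i n => gdig_01 hm i n, ?_⟩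
  set c : Fin m → ℝ := fun j => ∑' n, d j n * ((1 - β) * β ^ n) with hc
  set Pd : ℝ := ∏ i, (1 - μ + μ * c i) with hPd
  have hθ0 : (0:ℝ) ≤ 1 - μ := by linarith
  -- the factor bracketing for every time r
  have hfac : ∀ r (j : Fin m), gA β μ x m hm r j ≤ 1 - μ + μ * c j ∧
      1 - μ + μ * c j ≤ gA β μ x m hm r j + μ * β ^ gL m r j := by
    intro r j
    have hps := gA_partial_sum (x := x) hm hβ0 hβ1 hμ0 r j
    have htb := digit_tail_bounds (β := β) (ε := d j) (le_of_lt hβ0) hβ1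
      (fun n => gdig_01 hm j n) (gL m r j)
    constructor
    · rw [hps]
      have := mul_le_mul_of_nonneg_left htb.1 (le_of_lt hμ0)
      linarith
    · rw [hps]
      have := mul_le_mul_of_nonneg_left htb.2 (le_of_lt hμ0)
      rw [mul_add] at this
      linarith
  -- products bracket Pd between Pmin r and Pmax r
  have hspec := gA_spec hm hβ0 hβ1 hμ0 hμ1 hkey hx1 hx2
  have hbrack : ∀ r, |x - Pd| ≤ (m:ℝ) * (μ * β ^ (r / m)) := by
    intro r
    obtain ⟨hbnd, hmin, hmax⟩ := hspec r
    have hPd_lb : ∏ j, gA β μ x m hm r j ≤ Pd := by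
      apply Finset.prod_le_prod (fun j _ => le_trans hθ0 (hbnd j).1)
        (fun j _ => (hfac r j).1)
    have hPd_ub : Pd ≤ ∏ j, (gA β μ x m hm r j + μ * β ^ gL m r j) := by
      apply Finset.prod_le_prod
        (fun j _ => le_trans hθ0 (le_trans (hbnd j).1 (le_trans (le_refl _) (by
          have := (hfac r j).1; linarith [this]))))
      · exact fun j _ => (hfac r j).2
    -- width of the bracket
    have hwidth : ∏ j, (gA β μ x m hm r j + μ * β ^ gL m r j)
        ≤ ∏ j, gA β μ x m hm r j + (m:ℝ) * (μ * β ^ (r / m)) := by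
      have hle := prod_add_le Finset.univ (fun j => gA β μ x m hm r j)
        (fun j => μ * β ^ gL m r j)
        (fun j _ => le_trans hθ0 (hbnd j).1)
        (fun j _ => by positivity)
        (fun j _ => (hbnd j).2)
      have hsum : ∑ j : Fin m, μ * β ^ gL m r j ≤ (m:ℝ) * (μ * β ^ (r / m)) := by
        calc ∑ j : Fin m, μ * β ^ gL m r j ≤ ∑ _j : Fin m, μ * β ^ (r / m) := by
              apply Finset.sum_le_sum
              intro j _
              have : β ^ gL m r j ≤ β ^ (r / m) :=
                pow_le_pow_of_le_one (le_of_lt hβ0) (le_of_lt hβ1) (gL_lb m r j)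
              exact mul_le_mul_of_nonneg_left this (le_of_lt hμ0)
          _ = (m:ℝ) * (μ * β ^ (r / m)) := by
              rw [Finset.sum_const, Finset.card_univ, Fintype.card_fin, nsmul_eq_mul]
      linarith
    rw [abs_sub_le_iff]
    constructor <;> linarith
  -- conclude by letting r → ∞ along multiples of m
  have hq : ∀ q : ℕ, |x - Pd| ≤ ((m:ℝ) * μ) * β ^ q := by
    intro q
    have := hbrack (m * q)
    rw [Nat.mul_div_cancel_left q hm] at this
    linarith [this]
  have htend : Filter.Tendsto (fun q : ℕ => ((m:ℝ) * μ) * β ^ q) Filter.atTop (nhds 0) := by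
    have := (tendsto_pow_atTop_nhds_zero_of_lt_one (le_of_lt hβ0) hβ1).const_mul ((m:ℝ) * μ)
    simpa using this
  have habs : |x - Pd| ≤ 0 := ge_of_tendsto' htend hq
  have : x = Pd := by
    have := abs_nonneg (x - Pd)
    have h0 : |x - Pd| = 0 := le_antisymm habs this
    have := abs_eq_zero.mp h0
    linarith
  exact this

end core4

lemma key_calc (α β u v : ℝ) (h0 : 1 / 3 < α) (h1 : α < 1) (hβ : β = (1 - α) / 2)
    (hu : 1 ≤ u) (hv0 : 0 ≤ v) (hv : (3 * α - 1) / 2 ≤ v * ((1 - α ^ 2) / 4)) :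
    1 - β ≤ 2 * β * u + 2 * β * v := by
  subst hβ
  have hα1 : (0:ℝ) < 1 + α := by linarith
  have hβ0 : (0:ℝ) < (1 - α) / 2 := by linarith
  have h2bu : 2 * ((1 - α) / 2) ≤ 2 * ((1 - α) / 2) * u := by nlinarith
  have h2bv : 2 * (3 * α - 1) ≤ (1 + α) * (2 * ((1 - α) / 2) * v) := by nlinarith
  have hmul : (1 + α) * (1 - (1 - α) / 2)
      ≤ (1 + α) * (2 * ((1 - α) / 2) * u + 2 * ((1 - α) / 2) * v) := by nlinarith
  exact le_of_mul_le_mul_left hmul hα1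

/-- Theorem 5 (case `α > 1/3`): the interval `[θ^{t+1}, θ^{t−1}]`, with
`θ = 1 − ((1−α)/2)^k` and `t = s + p` as specified, consists of products of `2t`
elements of `C_α`. -/
theorem products_interval_thick (α : ℝ) (h0 : 1 / 3 < α) (h1 : α < 1)
    (k t s p : ℕ) (hk : 0 < k) (ht : 0 < t) (hs : 0 < s) (hp : 0 < p)
    (htsp : t = s + p)
    (hseq : s = ⌈1 / (1 - ((1 - α) / 2) ^ k) ^ (2 * t - 1)⌉₊)
    (hpeq : p = ⌈((3 * α - 1) / 2) /
        ((1 - ((1 - α) / 2) ^ k) ^ (2 * t - 1) * ((1 - α ^ 2) / 4))⌉₊) :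
    Set.Icc ((1 - ((1 - α) / 2) ^ k) ^ (t + 1)) ((1 - ((1 - α) / 2) ^ k) ^ (t - 1))
      ⊆ {x : ℝ | ∃ c : Fin (2 * t) → ℝ, (∀ i, c i ∈ centralCantor α) ∧ x = ∏ i, c i} := by
  intro x hx
  obtain ⟨hxl, hxr⟩ := hx
  set β : ℝ := (1 - α) / 2 with hβdef
  have hβ0 : 0 < β := by rw [hβdef]; linarith
  have hβ13 : β < 1 / 3 := by rw [hβdef]; linarith
  have hβ1 : β < 1 := by linarith
  set μ : ℝ := β ^ k with hμdef
  have hμ0 : 0 < μ := pow_pos hβ0 k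
  have hμ1 : μ < 1 := pow_lt_one₀ (le_of_lt hβ0) hβ1 (by omega)
  have hθ0 : (0:ℝ) < 1 - μ := by linarith
  have hθ1 : (1:ℝ) - μ ≤ 1 := by linarith
  have hθp : (0:ℝ) < (1 - μ) ^ (2 * t - 1) := pow_pos hθ0 _
  -- extract the two quantitative hypotheses
  have hA : 1 ≤ (s:ℝ) * (1 - μ) ^ (2 * t - 1) := by
    have hceil : (1 / (1 - μ) ^ (2 * t - 1) : ℝ) ≤ (s:ℝ) := by
      rw [hseq]; exact_mod_cast Nat.le_ceil _
    rw [div_le_iff₀ hθp] at hceil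
    linarith
  have hden : (0:ℝ) < (1 - μ) ^ (2 * t - 1) * ((1 - α ^ 2) / 4) := by
    apply mul_pos hθp
    nlinarith
  have hB : (3 * α - 1) / 2 ≤ (p:ℝ) * ((1 - μ) ^ (2 * t - 1) * ((1 - α ^ 2) / 4)) := by
    have hceil : ((3 * α - 1) / 2) / ((1 - μ) ^ (2 * t - 1) * ((1 - α ^ 2) / 4)) ≤ (p:ℝ) := by
      rw [hpeq]; exact_mod_cast Nat.le_ceil _
    rw [div_le_iff₀ hden] at hceil
    linarith
  -- the key inequality
  have hts : (t:ℝ) = (s:ℝ) + (p:ℝ) := by exact_mod_cast htsp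
  have hkey : 1 - β ≤ (1 - μ) ^ (2 * t - 1) * (((2 * t : ℕ):ℝ) * β) := by
    have hu : (1:ℝ) ≤ (s:ℝ) * (1 - μ) ^ (2 * t - 1) := hA
    have hv0 : (0:ℝ) ≤ (p:ℝ) * (1 - μ) ^ (2 * t - 1) := by positivity
    have hv : (3 * α - 1) / 2 ≤ ((p:ℝ) * (1 - μ) ^ (2 * t - 1)) * ((1 - α ^ 2) / 4) := by
      calc (3 * α - 1) / 2 ≤ (p:ℝ) * ((1 - μ) ^ (2 * t - 1) * ((1 - α ^ 2) / 4)) := hB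
        _ = ((p:ℝ) * (1 - μ) ^ (2 * t - 1)) * ((1 - α ^ 2) / 4) := by ring
    have hcalc := key_calc α β ((s:ℝ) * (1 - μ) ^ (2 * t - 1))
      ((p:ℝ) * (1 - μ) ^ (2 * t - 1)) h0 h1 hβdef hu hv0 hv
    have hexp : (1 - μ) ^ (2 * t - 1) * (((2 * t : ℕ):ℝ) * β)
        = 2 * β * ((s:ℝ) * (1 - μ) ^ (2 * t - 1)) + 2 * β * ((p:ℝ) * (1 - μ) ^ (2 * t - 1)) := by
      push_cast [htsp]
      ring
    rw [hexp]
    exact hcalc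
  -- bracket x
  have hθle1 : (1 - μ : ℝ) ≤ 1 := hθ1
  have hx1 : (1 - μ) ^ (2 * t) ≤ x := by
    calc (1 - μ) ^ (2 * t) ≤ (1 - μ) ^ (t + 1) :=
          pow_le_pow_of_le_one (le_of_lt hθ0) hθle1 (by omega)
      _ ≤ x := hxl
  have hx2 : x ≤ 1 := by
    calc x ≤ (1 - μ) ^ (t - 1) := hxr
      _ ≤ 1 := pow_le_one₀ (le_of_lt hθ0) hθle1
  -- apply the core existence lemma
  have hm : 0 < 2 * t := by omega
  obtain ⟨ε, hε01, hεprod⟩ := core_exists hm hβ0 hβ1 hμ0 hμ1 hkey hx1 hx2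
  refine ⟨fun i => 1 - μ + μ * ∑' n, ε i n * ((1 - β) * β ^ n), fun i => ?_, hεprod⟩
  -- each factor lies in the central Cantor set
  set T : ℝ := ∑' n, ε i n * ((1 - β) * β ^ n) with hT
  refine ⟨fun n => if n < k then 1 else ε i (n - k), fun n => ?_, ?_⟩
  · by_cases h : n < k
    · simp [h]
    · simpa [h] using hε01 i (n - k)
  set ε' : ℕ → ℝ := fun n => if n < k then 1 else ε i (n - k) with hε'
  have hε'01 : ∀ n, ε' n = 0 ∨ ε' n = 1 := fun n => by
    rw [hε']
    by_cases h : n < k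
    · simp [h]
    · simpa [h] using hε01 i (n - k)
  have hconv : ∀ n : ℕ, ε' n * ((1 + α) / 2) * ((1 - α) / 2) ^ n = ε' n * ((1 - β) * β ^ n) := by
    intro n
    rw [hβdef]; ring
  rw [tsum_congr hconv]
  have hsumm : Summable (fun n => ε' n * ((1 - β) * β ^ n)) :=
    digit_summable (le_of_lt hβ0) hβ1 hε'01
  have hsplit := Summable.sum_add_tsum_nat_add (f := fun n => ε' n * ((1 - β) * β ^ n)) k hsumm
  have hhead : ∑ n ∈ Finset.range k, ε' n * ((1 - β) * β ^ n) = 1 - β ^ k := by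
    have hcongr : ∀ n ∈ Finset.range k, ε' n * ((1 - β) * β ^ n) = (1 - β) * β ^ n := by
      intro n hn
      rw [hε']
      simp only [if_pos (Finset.mem_range.mp hn)]
      ring
    rw [Finset.sum_congr rfl hcongr, ← Finset.mul_sum]
    have hgs := geom_sum_mul β k
    linear_combination (-1 : ℝ) * hgs
  have htail : ∑' n : ℕ, ε' (n + k) * ((1 - β) * β ^ (n + k)) = T * β ^ k := by
    have hcongr : ∀ n : ℕ, ε' (n + k) * ((1 - β) * β ^ (n + k))
        = (ε i n * ((1 - β) * β ^ n)) * β ^ k := by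
      intro n
      rw [hε']
      simp only [if_neg (by omega : ¬ (n + k < k))]
      have : n + k - k = n := by omega
      rw [this, pow_add]
      ring
    rw [tsum_congr hcongr, tsum_mul_right]
  rw [← hsplit, hhead, htail, hT]
  rw [hμdef]
  ring
end

section
/- Let α_1 ≥ α_2 ≥ ⋯ ≥ α_n and β_1 ≥ β_2 ≥ ⋯ ≥ β_p be reals in (0,1) with α_1 = β_1, and for each i let k_{α_i} and k_{β_i} be positive integers; set θ_{α_i} = 1 − ((1−α_i)/2)^{k_{α_i}}, θ_{β_i} = 1 − ((1−β_i)/2)^{k_{β_i}}, and χ = (Π_{i=1}^{n} θ_{α_i})·(Π_{i=1}^{p} θ_{β_i}). Suppose n = n_1 + n_2 and p = r_1 + r_2 for positive integers n_1, n_2, r_1, r_2 satisfying: χ·Σ_{i=1}^{n_1} ((1−α_i)/2)² > (3α_1 − 1)/(1+α_1); χ·Σ_{i=n_1+1}^{n_1+n_2} ((1−α_i)/2) > 1; χ·Σ_{i=1}^{r_1} ((1−β_i)/2)² > (3β_1 − 1)/(1+β_1); and χ·Σ_{i=r_1+1}^{r_1+r_2} ((1−β_i)/2) > 1. Then both closed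 intervals [ (Π_{i=1}^{p} θ_{β_i})·θ_{α_1} , Π_{i=2}^{p} θ_{β_i} ] and [ (Π_{i=1}^{n} θ_{α_i})·θ_{β_1} , Π_{i=2}^{n} θ_{α_i} ] are contained in the set Γ = { (Π_{k=1}^{n} c_k)·(Π_{l=1}^{p} d_l) : c_k ∈ C_{α_k}, d_l ∈ C_{β_l} }. -/
open scoped BigOperators

/-- `θ_{α} = 1 − ((1−α)/2)^k`, the left endpoint of the rightmost closed interval
at stage `k` of the construction of `C_α`. -/
noncomputable def theta (α : ℝ) (k : ℕ) : ℝ := 1 - ((1 - α) / 2) ^ k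

namespace CantorAux

/-- partial value of a binary word -/
noncomputable def pval (l : ℝ) (w : ℕ → Bool) (d : ℕ) : ℝ :=
  ∑ n ∈ Finset.range d, (bif w n then (1 - l) * l ^ n else 0)

lemma term_nonneg {l : ℝ} (h0 : 0 ≤ l) (h1 : l ≤ 1) (b : Bool) (n : ℕ) :
    0 ≤ (bif b then (1 - l) * l ^ n else 0) := by
  cases b
  · simp
  · simp only [cond]; exact mul_nonneg (by linarith) (pow_nonneg h0 n)

lemma term_le {l : ℝ} (h0 : 0 ≤ l) (h1 : l ≤ 1) (b : Bool) (n : ℕ) :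
    (bif b then (1 - l) * l ^ n else 0) ≤ (1 - l) * l ^ n := by
  cases b
  · simp only [cond]; exact mul_nonneg (by linarith) (pow_nonneg h0 n)
  · simp only [cond]; exact le_refl _

lemma pval_succ (l : ℝ) (w : ℕ → Bool) (d : ℕ) :
    pval l w (d + 1) = pval l w d + (bif w d then (1 - l) * l ^ d else 0) :=
  Finset.sum_range_succ _ _

lemma pval_nonneg {l : ℝ} (h0 : 0 ≤ l) (h1 : l ≤ 1) (w : ℕ → Bool) (d : ℕ) :
    0 ≤ pval l w d :=
  Finset.sum_nonneg (fun n _ => term_nonneg h0 h1 (w n) n)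

lemma pval_le {l : ℝ} (h0 : 0 ≤ l) (h1 : l ≤ 1) (w : ℕ → Bool) (d : ℕ) :
    pval l w d + l ^ d ≤ 1 := by
  induction d with
  | zero => simp [pval]
  | succ d ih =>
    rw [pval_succ]
    have hterm := term_le h0 h1 (w d) d
    have hpow : (0:ℝ) ≤ l ^ d := pow_nonneg h0 d
    have : l ^ (d+1) = l * l ^ d := by ring
    nlinarith

lemma pval_congr {l : ℝ} {w w' : ℕ → Bool} {d : ℕ} (h : ∀ n < d, w n = w' n) :
    pval l w d = pval l w' d := by
  apply Finset.sum_congr rfl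
  intro n hn
  rw [h n (Finset.mem_range.mp hn)]

lemma pval_true (l : ℝ) (d : ℕ) : pval l (fun _ => true) d = 1 - l ^ d := by
  induction d with
  | zero => simp [pval]
  | succ d ih => rw [pval_succ, ih]; simp only [cond]; ring

/-- total value of an infinite binary word -/
noncomputable def wval (l : ℝ) (w : ℕ → Bool) : ℝ :=
  ∑' n : ℕ, (bif w n then (1 - l) * l ^ n else 0)

lemma wval_summable {l : ℝ} (h0 : 0 ≤ l) (h1 : l < 1) (w : ℕ → Bool) :
    Summable (fun n => (bif w n then (1 - l) * l ^ n else 0)) := by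
  refine Summable.of_nonneg_of_le (fun n => term_nonneg h0 h1.le (w n) n)
    (fun n => le_trans (term_le h0 h1.le (w n) n) ?_)
    (summable_geometric_of_lt_one h0 h1)
  have := pow_nonneg h0 n
  nlinarith

lemma wval_mem {l : ℝ} (h0 : 0 < l) (h1 : l < 1) (w : ℕ → Bool) :
    wval l w ∈ centralCantor (1 - 2 * l) := by
  refine ⟨fun n => (bif w n then 1 else 0), fun n => ?_, ?_⟩
  · cases hw : w n <;> simp [hw]
  · have e1 : (1 + (1 - 2 * l)) / 2 = 1 - l := by ring
    have e2 : (1 - (1 - 2 * l)) / 2 = l := by ring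
    rw [e1, e2]
    exact tsum_congr (fun n => by cases hw : w n <;> simp [hw])

lemma wval_between {l : ℝ} (h0 : 0 < l) (h1 : l < 1) (w : ℕ → Bool) (d : ℕ) :
    pval l w d ≤ wval l w ∧ wval l w ≤ pval l w d + l ^ d := by
  have hs := wval_summable h0.le h1 w
  have hsplit := Summable.sum_add_tsum_nat_add (f := fun n => (bif w n then (1 - l) * l ^ n else 0)) d hs
  have htail_nonneg : 0 ≤ ∑' n : ℕ, (bif w (n + d) then (1 - l) * l ^ (n + d) else 0) :=
    tsum_nonneg (fun n => term_nonneg h0.le h1.le _ _)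
  have htail_le : (∑' n : ℕ, (bif w (n + d) then (1 - l) * l ^ (n + d) else 0)) ≤ l ^ d := by
    have hb : ∀ n : ℕ, (bif w (n + d) then (1 - l) * l ^ (n + d) else 0) ≤ ((1 - l) * l ^ d) * l ^ n := by
      intro n
      refine le_trans (term_le h0.le h1.le _ _) (le_of_eq ?_)
      rw [pow_add]; ring
    have hsg : Summable (fun n : ℕ => ((1 - l) * l ^ d) * l ^ n) :=
      (summable_geometric_of_lt_one h0.le h1).mul_left _
    have hss : Summable (fun n : ℕ => (bif w (n + d) then (1 - l) * l ^ (n + d) else 0)) :=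
      (summable_nat_add_iff d).2 hs
    have hne : (1:ℝ) - l ≠ 0 := by linarith
    calc (∑' n : ℕ, (bif w (n + d) then (1 - l) * l ^ (n + d) else 0))
        ≤ ∑' n : ℕ, ((1 - l) * l ^ d) * l ^ n := Summable.tsum_le_tsum hb hss hsg
      _ = ((1 - l) * l ^ d) * (1 - l)⁻¹ := by rw [tsum_mul_left, tsum_geometric_of_lt_one h0.le h1]
      _ = l ^ d := by field_simp
  constructor
  · rw [wval, ← hsplit]; unfold pval; linarith
  · rw [wval, ← hsplit]; unfold pval; linarith

lemma prod_ge_one_add_sum {ι : Type} {E : Finset ι} {u l : ι → ℝ}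
    (hu0 : ∀ j ∈ E, 0 ≤ u j) (hu1 : ∀ j ∈ E, u j ≤ 1) (hl : ∀ j ∈ E, 0 ≤ l j) :
    (1 + ∑ j ∈ E, l j) * ∏ j ∈ E, u j ≤ ∏ j ∈ E, (u j + l j) := by
  induction E using Finset.cons_induction with
  | empty => simp
  | cons a s ha ih =>
    rw [Finset.prod_cons, Finset.prod_cons, Finset.sum_cons]
    have hu0a := hu0 a (Finset.mem_cons_self a s)
    have hu1a := hu1 a (Finset.mem_cons_self a s)
    have hla := hl a (Finset.mem_cons_self a s)
    have ih' := ih (fun j hj => hu0 j (Finset.mem_cons_of_mem hj))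
      (fun j hj => hu1 j (Finset.mem_cons_of_mem hj))
      (fun j hj => hl j (Finset.mem_cons_of_mem hj))
    have hsum0 : 0 ≤ ∑ j ∈ s, l j := Finset.sum_nonneg (fun j hj => hl j (Finset.mem_cons_of_mem hj))
    have hprod0 : 0 ≤ ∏ j ∈ s, u j :=
      Finset.prod_nonneg (fun j hj => hu0 j (Finset.mem_cons_of_mem hj))
    calc (1 + (l a + ∑ j ∈ s, l j)) * (u a * ∏ j ∈ s, u j)
        ≤ ((u a + l a) * (1 + ∑ j ∈ s, l j)) * ∏ j ∈ s, u j := by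
          nlinarith [mul_nonneg (mul_nonneg hla (by linarith : (0:ℝ) ≤ 1 - u a + ∑ j ∈ s, l j)) hprod0]
      _ = (u a + l a) * ((1 + ∑ j ∈ s, l j) * ∏ j ∈ s, u j) := by ring
      _ ≤ (u a + l a) * ∏ j ∈ s, (u j + l j) := by
          apply mul_le_mul_of_nonneg_left ih' (by linarith)

lemma prod_sub_le_sum {ι : Type} {E : Finset ι} {u l : ι → ℝ}
    (hu0 : ∀ j ∈ E, 0 ≤ u j) (hl : ∀ j ∈ E, 0 ≤ l j) (hul : ∀ j ∈ E, u j + l j ≤ 1) :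
    ∏ j ∈ E, (u j + l j) ≤ (∏ j ∈ E, u j) + ∑ j ∈ E, l j := by
  induction E using Finset.cons_induction with
  | empty => simp
  | cons a s ha ih =>
    rw [Finset.prod_cons, Finset.prod_cons, Finset.sum_cons]
    have hu0a := hu0 a (Finset.mem_cons_self a s)
    have hla := hl a (Finset.mem_cons_self a s)
    have hula := hul a (Finset.mem_cons_self a s)
    have ih' := ih (fun j hj => hu0 j (Finset.mem_cons_of_mem hj))
      (fun j hj => hl j (Finset.mem_cons_of_mem hj))
      (fun j hj => hul j (Finset.mem_cons_of_mem hj))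
    have hsum0 : 0 ≤ ∑ j ∈ s, l j := Finset.sum_nonneg (fun j hj => hl j (Finset.mem_cons_of_mem hj))
    have hprod0 : 0 ≤ ∏ j ∈ s, u j :=
      Finset.prod_nonneg (fun j hj => hu0 j (Finset.mem_cons_of_mem hj))
    have hprod1 : ∏ j ∈ s, u j ≤ 1 :=
      Finset.prod_le_one (fun j hj => hu0 j (Finset.mem_cons_of_mem hj))
        (fun j hj => le_trans (le_add_of_nonneg_right (hl j (Finset.mem_cons_of_mem hj)))
          (hul j (Finset.mem_cons_of_mem hj)))
    have hplus0 : 0 ≤ ∏ j ∈ s, (u j + l j) :=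
      Finset.prod_nonneg (fun j hj => add_nonneg (hu0 j (Finset.mem_cons_of_mem hj))
        (hl j (Finset.mem_cons_of_mem hj)))
    calc (u a + l a) * ∏ j ∈ s, (u j + l j)
        ≤ (u a + l a) * ((∏ j ∈ s, u j) + ∑ j ∈ s, l j) := by
          apply mul_le_mul_of_nonneg_left ih' (by linarith)
      _ ≤ u a * ∏ j ∈ s, u j + (l a + ∑ j ∈ s, l j) := by nlinarith
variable {ι : Type} [DecidableEq ι]

/-- bottom of the current stage interval of coordinate `i` -/
noncomputable def uu (lam : ι → ℝ) (σ : ι → (ℕ → Bool) × ℕ) (i : ι) : ℝ :=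
  pval (lam i) (σ i).1 (σ i).2

/-- length of the current stage interval of coordinate `i` -/
noncomputable def ll (lam : ι → ℝ) (σ : ι → (ℕ → Bool) × ℕ) (i : ι) : ℝ :=
  lam i ^ (σ i).2

/-- invariant of the refinement process -/
def INV (F : Finset ι) (lam : ι → ℝ) (x : ℝ) (σ : ι → (ℕ → Bool) × ℕ) : Prop :=
  (∀ i ∈ F, 1 - lam i ≤ uu lam σ i) ∧
  (∀ i ∈ F, ∀ j ∈ F, lam i * ll lam σ j ≤ ll lam σ i) ∧
  (∏ i ∈ F, uu lam σ i ≤ x) ∧ (x ≤ ∏ i ∈ F, (uu lam σ i + ll lam σ i))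

/-- one-step transition relation -/
def RStep (F : Finset ι) (lam : ι → ℝ) (σ σ' : ι → (ℕ → Bool) × ℕ) : Prop :=
  ∃ i₀ ∈ F, (∀ j, j ≠ i₀ → σ' j = σ j) ∧ ((σ' i₀).2 = (σ i₀).2 + 1) ∧
    (∀ n < (σ i₀).2, (σ' i₀).1 n = (σ i₀).1 n) ∧
    (∀ j ∈ F, uu lam σ j ≤ uu lam σ' j ∧ uu lam σ' j + ll lam σ' j ≤ uu lam σ j + ll lam σ j) ∧
    (∀ j ∈ F, ll lam σ j ≤ ll lam σ i₀)

set_option maxHeartbeats 1000000 in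
lemma step_ex (F : Finset ι) (lam : ι → ℝ) (x : ℝ) (hF : F.Nonempty)
    (hl0 : ∀ i ∈ F, 0 < lam i) (hl1 : ∀ i ∈ F, lam i < 1/2)
    (hsum : ∀ i ∈ F, (1:ℝ) ≤ ∑ j ∈ F.erase i, lam j)
    (σ : ι → (ℕ → Bool) × ℕ) (hINV : INV F lam x σ) :
    ∃ σ', INV F lam x σ' ∧ RStep F lam σ σ' := by
  obtain ⟨i₀, hi₀F, hmax⟩ := Finset.exists_max_image F (ll lam σ) hF
  obtain ⟨h1, h2, hbox1, hbox2⟩ := hINV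
  set w := (σ i₀).1 with hw
  set d := (σ i₀).2 with hd
  set li := lam i₀ with hli
  have hli0 : 0 < li := hl0 _ hi₀F
  have hli1 : li < 1/2 := hl1 _ hi₀F
  set u₀ := uu lam σ i₀ with hu₀
  set M := ll lam σ i₀ with hM
  have hMval : M = li ^ d := rfl
  have hM0 : 0 ≤ M := by rw [hMval]; positivity
  set E := F.erase i₀ with hE
  have hEF : ∀ j ∈ E, j ∈ F := fun j hj => Finset.mem_of_mem_erase hj
  have hupos : ∀ j ∈ F, 0 < uu lam σ j := by
    intro j hj
    have := h1 j hj
    have := hl1 j hj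
    linarith
  have hll0 : ∀ j ∈ F, 0 ≤ ll lam σ j := by
    intro j hj
    have := (hl0 j hj).le
    unfold ll; positivity
  have hule : ∀ j ∈ F, uu lam σ j + ll lam σ j ≤ 1 := by
    intro j hj
    exact pval_le (hl0 j hj).le (by have := hl1 j hj; linarith) _ _
  -- sum of lengths of the other coordinates
  set S := ∑ j ∈ E, ll lam σ j with hSdef
  have hS_ge : M ≤ S := by
    have hstep : ∀ j ∈ E, lam j * M ≤ ll lam σ j := fun j hj => h2 j (hEF j hj) i₀ hi₀F
    have : (∑ j ∈ E, lam j) * M ≤ S := by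
      rw [Finset.sum_mul]
      exact Finset.sum_le_sum hstep
    have hs1 : (1:ℝ) ≤ ∑ j ∈ E, lam j := hsum i₀ hi₀F
    nlinarith
  have hS0 : 0 ≤ S := Finset.sum_nonneg (fun j hj => hll0 j (hEF j hj))
  have hu₀ge : 1 - li ≤ u₀ := h1 i₀ hi₀F
  have hu₀0 : 0 < u₀ := hupos i₀ hi₀F
  have hPm0 : 0 ≤ ∏ j ∈ E, uu lam σ j :=
    Finset.prod_nonneg (fun j hj => (hupos j (hEF j hj)).le)
  have hprodge : (1 + S) * ∏ j ∈ E, uu lam σ j ≤ ∏ j ∈ E, (uu lam σ j + ll lam σ j) :=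
    prod_ge_one_add_sum (fun j hj => (hupos j (hEF j hj)).le)
      (fun j hj => by have := hule j (hEF j hj); have := hll0 j (hEF j hj); linarith)
      (fun j hj => hll0 j (hEF j hj))
  have key : (u₀ + (1 - li) * M) * ∏ j ∈ E, uu lam σ j
      ≤ (u₀ + li * M) * ∏ j ∈ E, (uu lam σ j + ll lam σ j) := by
    have hc1 : (u₀ + li * M) * ((1 + S) * ∏ j ∈ E, uu lam σ j)
        ≤ (u₀ + li * M) * ∏ j ∈ E, (uu lam σ j + ll lam σ j) :=
      mul_le_mul_of_nonneg_left hprodge (by nlinarith)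
    have hc2 : (u₀ + (1 - li) * M) ≤ (u₀ + li * M) * (1 + S) := by
      have hu₀S : (1 - 2*li) * M ≤ u₀ * S := by nlinarith
      nlinarith [mul_nonneg hli0.le hM0, mul_nonneg (mul_nonneg hli0.le hM0) hS0]
    calc (u₀ + (1 - li) * M) * ∏ j ∈ E, uu lam σ j
        ≤ ((u₀ + li * M) * (1 + S)) * ∏ j ∈ E, uu lam σ j :=
          mul_le_mul_of_nonneg_right hc2 hPm0
      _ = (u₀ + li * M) * ((1 + S) * ∏ j ∈ E, uu lam σ j) := by ring
      _ ≤ (u₀ + li * M) * ∏ j ∈ E, (uu lam σ j + ll lam σ j) := hc1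
  -- product splitting
  have hbotsplit : ∏ i ∈ F, uu lam σ i = u₀ * ∏ j ∈ E, uu lam σ j :=
    (Finset.mul_prod_erase F _ hi₀F).symm
  have htopsplit : ∏ i ∈ F, (uu lam σ i + ll lam σ i)
      = (u₀ + M) * ∏ j ∈ E, (uu lam σ j + ll lam σ j) :=
    (Finset.mul_prod_erase F _ hi₀F).symm
  -- generic facts about the two children
  set upd := fun b : Bool => Function.update σ i₀ (Function.update w d b, d + 1) with hupddef
  have hupdi₀ : ∀ b, (upd b) i₀ = (Function.update w d b, d + 1) :=
    fun b => Function.update_self _ _ _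
  have hupdother : ∀ b j, j ≠ i₀ → (upd b) j = σ j :=
    fun b j hj => Function.update_of_ne hj _ _
  have huu_other : ∀ b j, j ≠ i₀ → uu lam (upd b) j = uu lam σ j := by
    intro b j hj; unfold uu; rw [hupdother b j hj]
  have hll_other : ∀ b j, j ≠ i₀ → ll lam (upd b) j = ll lam σ j := by
    intro b j hj; unfold ll; rw [hupdother b j hj]
  have huu_i₀ : ∀ b, uu lam (upd b) i₀ = u₀ + (bif b then (1 - li) * M else 0) := by
    intro b
    show pval (lam i₀) ((upd b) i₀).1 ((upd b) i₀).2 = _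
    rw [hupdi₀ b]
    show pval li (Function.update w d b) (d + 1) = _
    rw [pval_succ, Function.update_self,
      pval_congr (fun n hn => Function.update_of_ne (Nat.ne_of_lt hn) b w)]
    have hu : u₀ = pval li w d := rfl
    rw [← hu, ← hMval]
  have hll_i₀ : ∀ b, ll lam (upd b) i₀ = li * M := by
    intro b
    show lam i₀ ^ ((upd b) i₀).2 = _
    rw [hupdi₀ b]
    show li ^ (d + 1) = _
    rw [pow_succ, hMval]; ring
  have hprodbot : ∀ b, ∏ i ∈ F, uu lam (upd b) i
      = (u₀ + (bif b then (1 - li) * M else 0)) * ∏ j ∈ E, uu lam σ j := by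
    intro b
    rw [← Finset.mul_prod_erase F _ hi₀F, huu_i₀ b]
    congr 1
    exact Finset.prod_congr rfl (fun j hj => huu_other b j (Finset.ne_of_mem_erase hj))
  have hprodtop : ∀ b, ∏ i ∈ F, (uu lam (upd b) i + ll lam (upd b) i)
      = (u₀ + (bif b then (1 - li) * M else 0) + li * M) * ∏ j ∈ E, (uu lam σ j + ll lam σ j) := by
    intro b
    rw [← Finset.mul_prod_erase F _ hi₀F, huu_i₀ b, hll_i₀ b]
    congr 1
    exact Finset.prod_congr rfl (fun j hj => by
      rw [huu_other b j (Finset.ne_of_mem_erase hj), hll_other b j (Finset.ne_of_mem_erase hj)])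
  have hcommon : ∀ b : Bool, (∏ i ∈ F, uu lam (upd b) i ≤ x) →
      (x ≤ ∏ i ∈ F, (uu lam (upd b) i + ll lam (upd b) i)) →
      INV F lam x (upd b) ∧ RStep F lam σ (upd b) := by
    intro b hb1 hb2
    have hbif0 : 0 ≤ (bif b then (1 - li) * M else 0) := by
      cases b
      · simp
      · simp only [cond]; nlinarith
    have hliM0 : 0 ≤ li * M := by positivity
    constructor
    · refine ⟨?_, ?_, hb1, hb2⟩
      · intro i hi
        by_cases hii : i = i₀
        · rw [hii, huu_i₀ b, ← hli]; linarith
        · rw [huu_other b i hii]; exact h1 i hi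
      · intro i hi j hj
        by_cases hii : i = i₀ <;> by_cases hjj : j = i₀
        · rw [hii, hjj, hll_i₀ b, ← hli]
          nlinarith
        · rw [hii, hll_i₀ b, hll_other b j hjj, ← hli]
          exact mul_le_mul_of_nonneg_left (hmax j hj) hli0.le
        · rw [hjj, hll_i₀ b, hll_other b i hii]
          have h2' := h2 i hi i₀ hi₀F
          have hstep : lam i * (li * M) ≤ lam i * M := by
            apply mul_le_mul_of_nonneg_left _ (hl0 i hi).le
            nlinarith
          calc lam i * (li * M) ≤ lam i * M := hstep
            _ ≤ ll lam σ i := h2'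
        · rw [hll_other b i hii, hll_other b j hjj]; exact h2 i hi j hj
    · refine ⟨i₀, hi₀F, hupdother b, ?_, ?_, ?_, fun j hj => hmax j hj⟩
      · rw [hupdi₀ b]
      · intro n hn
        rw [hupdi₀ b]
        exact Function.update_of_ne (Nat.ne_of_lt hn) b w
      · intro j hj
        by_cases hjj : j = i₀
        · rw [hjj, huu_i₀ b, hll_i₀ b, ← hu₀, ← hM]
          constructor
          · linarith
          · cases b
            · simp only [cond]; nlinarith
            · simp only [cond]; nlinarith
        · rw [huu_other b j hjj, hll_other b j hjj]
          exact ⟨le_refl _, le_refl _⟩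
  by_cases hcase : x ≤ (u₀ + li * M) * ∏ j ∈ E, (uu lam σ j + ll lam σ j)
  case pos =>
    have hb1 : ∏ i ∈ F, uu lam (upd false) i ≤ x := by
      rw [hprodbot false]
      simp only [cond, add_zero]
      rw [← hbotsplit]
      exact hbox1
    have hb2 : x ≤ ∏ i ∈ F, (uu lam (upd false) i + ll lam (upd false) i) := by
      rw [hprodtop false]
      simp only [cond, add_zero]
      exact hcase
    exact ⟨upd false, (hcommon false hb1 hb2).1, (hcommon false hb1 hb2).2⟩
  case neg =>
    have hx' : (u₀ + li * M) * ∏ j ∈ E, (uu lam σ j + ll lam σ j) < x := lt_of_not_ge hcase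
    have hb1 : ∏ i ∈ F, uu lam (upd true) i ≤ x := by
      rw [hprodbot true]
      simp only [cond]
      calc (u₀ + (1 - li) * M) * ∏ j ∈ E, uu lam σ j
          ≤ (u₀ + li * M) * ∏ j ∈ E, (uu lam σ j + ll lam σ j) := key
        _ ≤ x := hx'.le
    have hb2 : x ≤ ∏ i ∈ F, (uu lam (upd true) i + ll lam (upd true) i) := by
      rw [hprodtop true]
      simp only [cond]
      have he : u₀ + (1 - li) * M + li * M = u₀ + M := by ring
      rw [he, ← htopsplit]
      exact hbox2
    exact ⟨upd true, (hcommon true hb1 hb2).1, (hcommon true hb1 hb2).2⟩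


set_option maxHeartbeats 1600000 in
theorem main_cover (F : Finset ι) (lam : ι → ℝ) (m : ι → ℕ)
    (hl0 : ∀ i ∈ F, 0 < lam i) (hl1 : ∀ i ∈ F, lam i < 1/2)
    (hm : ∀ i ∈ F, 1 ≤ m i)
    (hwin : ∀ i ∈ F, ∀ j ∈ F, lam i * lam j ^ m j ≤ lam i ^ m i)
    (hsum : ∀ i ∈ F, (1:ℝ) ≤ ∑ j ∈ F.erase i, lam j)
    (x : ℝ) (hx1 : ∏ i ∈ F, (1 - lam i ^ m i) ≤ x) (hx2 : x ≤ 1) :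
    ∃ c : ι → ℝ, (∀ i ∈ F, c i ∈ centralCantor (1 - 2 * lam i)) ∧ ∏ i ∈ F, c i = x := by
  rcases F.eq_empty_or_nonempty with hFe | hF
  · subst hFe
    refine ⟨fun _ => 1, fun i hi => absurd hi (Finset.notMem_empty i), ?_⟩
    simp only [Finset.prod_empty] at hx1 ⊢
    linarith
  -- the initial state
  have hinv₀ : INV F lam x (fun i => ((fun _ => true), m i)) := by
    refine ⟨?_, ?_, ?_, ?_⟩
    · intro i hi
      show 1 - lam i ≤ pval (lam i) (fun _ => true) (m i)
      rw [pval_true]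
      have h1 := (hl0 i hi).le
      have h2 := hl1 i hi
      have h3 : lam i ^ m i ≤ lam i ^ 1 := pow_le_pow_of_le_one h1 (by linarith) (hm i hi)
      rw [pow_one] at h3
      linarith
    · intro i hi j hj
      exact hwin i hi j hj
    · calc ∏ i ∈ F, uu lam (fun i => ((fun _ => true), m i)) i
          = ∏ i ∈ F, (1 - lam i ^ m i) := Finset.prod_congr rfl (fun i _ => pval_true _ _)
        _ ≤ x := hx1
    · have : ∀ i ∈ F, uu lam (fun i => ((fun _ => true), m i)) i
          + ll lam (fun i => ((fun _ => true), m i)) i = 1 := by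
        intro i _
        show pval (lam i) (fun _ => true) (m i) + lam i ^ m i = 1
        rw [pval_true]; ring
      rw [Finset.prod_congr rfl this, Finset.prod_const_one]
      exact hx2
  -- the refinement process
  let P : ℕ → {σ : ι → (ℕ → Bool) × ℕ // INV F lam x σ} := fun t =>
    Nat.rec (motive := fun _ => {σ : ι → (ℕ → Bool) × ℕ // INV F lam x σ})
      ⟨fun i => ((fun _ => true), m i), hinv₀⟩
      (fun _ p => ⟨(step_ex F lam x hF hl0 hl1 hsum p.1 p.2).choose,
        (step_ex F lam x hF hl0 hl1 hsum p.1 p.2).choose_spec.1⟩) t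
  have hPstep : ∀ t, RStep F lam (P t).1 (P (t+1)).1 := fun t =>
    (step_ex F lam x hF hl0 hl1 hsum (P t).1 (P t).2).choose_spec.2
  -- chosen coordinates
  have hitdef : ∀ t, ∃ i₀ ∈ F, (∀ j, j ≠ i₀ → (P (t+1)).1 j = (P t).1 j) ∧
      (((P (t+1)).1 i₀).2 = ((P t).1 i₀).2 + 1) ∧
      (∀ n < ((P t).1 i₀).2, ((P (t+1)).1 i₀).1 n = ((P t).1 i₀).1 n) ∧
      (∀ j ∈ F, uu lam (P t).1 j ≤ uu lam (P (t+1)).1 j ∧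
        uu lam (P (t+1)).1 j + ll lam (P (t+1)).1 j ≤ uu lam (P t).1 j + ll lam (P t).1 j) ∧
      (∀ j ∈ F, ll lam (P t).1 j ≤ ll lam (P t).1 i₀) := fun t => hPstep t
  let it : ℕ → ι := fun t => (hitdef t).choose
  have hitF : ∀ t, it t ∈ F := fun t => (hitdef t).choose_spec.1
  have hoth : ∀ t j, j ≠ it t → (P (t+1)).1 j = (P t).1 j := fun t => (hitdef t).choose_spec.2.1
  have hdep : ∀ t, ((P (t+1)).1 (it t)).2 = ((P t).1 (it t)).2 + 1 :=
    fun t => (hitdef t).choose_spec.2.2.1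
  have hbit : ∀ t, ∀ n < ((P t).1 (it t)).2, ((P (t+1)).1 (it t)).1 n = ((P t).1 (it t)).1 n :=
    fun t => (hitdef t).choose_spec.2.2.2.1
  have hmono : ∀ t, ∀ j ∈ F, uu lam (P t).1 j ≤ uu lam (P (t+1)).1 j ∧
      uu lam (P (t+1)).1 j + ll lam (P (t+1)).1 j ≤ uu lam (P t).1 j + ll lam (P t).1 j :=
    fun t => (hitdef t).choose_spec.2.2.2.2.1
  have hmax : ∀ t, ∀ j ∈ F, ll lam (P t).1 j ≤ ll lam (P t).1 (it t) :=
    fun t => (hitdef t).choose_spec.2.2.2.2.2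
  -- single-step depth monotonicity (all coordinates)
  have hdmono1 : ∀ t j, ((P t).1 j).2 ≤ ((P (t+1)).1 j).2 := by
    intro t j
    by_cases hj : j = it t
    · rw [hj, hdep t]; omega
    · rw [hoth t j hj]
  -- chained depth monotonicity
  have hdmono : ∀ j s t, s ≤ t → ((P s).1 j).2 ≤ ((P t).1 j).2 := by
    intro j s t hst
    induction t, hst using Nat.le_induction with
    | base => exact le_refl _
    | succ t hst ih => exact le_trans ih (hdmono1 t j)
  -- chained bit stability
  have hbitchain : ∀ j s t, s ≤ t → ∀ n < ((P s).1 j).2, ((P t).1 j).1 n = ((P s).1 j).1 n := by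
    intro j s t hst
    induction t, hst using Nat.le_induction with
    | base => intro n _; rfl
    | succ t hst ih =>
      intro n hn
      by_cases hj : j = it t
      · have hn' : n < ((P t).1 (it t)).2 := by
          rw [← hj]; exact lt_of_lt_of_le hn (hdmono j s t hst)
        rw [hj, hbit t n hn', ← hj]
        exact ih n hn
      · rw [hoth t j hj]
        exact ih n hn
  -- chained interval monotonicity
  have humono : ∀ j, j ∈ F → ∀ s t, s ≤ t → uu lam (P s).1 j ≤ uu lam (P t).1 j ∧
      uu lam (P t).1 j + ll lam (P t).1 j ≤ uu lam (P s).1 j + ll lam (P s).1 j := by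
    intro j hj s t hst
    induction t, hst using Nat.le_induction with
    | base => exact ⟨le_refl _, le_refl _⟩
    | succ t hst ih =>
      obtain ⟨h1, h2⟩ := hmono t j hj
      exact ⟨le_trans ih.1 h1, le_trans h2 ih.2⟩
  -- an infinitely refined coordinate
  have hfib : ∃ i, i ∈ F ∧ {t | it t = i}.Infinite := by
    by_contra h
    push_neg at h
    have hfin : (⋃ i ∈ F, {t | it t = i}).Finite :=
      Set.Finite.biUnion F.finite_toSet (fun i hi => h i hi)
    have huniv : (Set.univ : Set ℕ) ⊆ ⋃ i ∈ F, {t | it t = i} := by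
      intro t _
      exact Set.mem_biUnion (hitF t) rfl
    exact Set.infinite_univ (hfin.subset huniv)
  obtain ⟨iS, hiSF, hiSinf⟩ := hfib
  -- its depth goes to infinity along the fiber
  have hdinf : ∀ N : ℕ, ∃ t, it t = iS ∧ N ≤ ((P t).1 iS).2 := by
    intro N
    induction N with
    | zero =>
      obtain ⟨t, ht⟩ := hiSinf.nonempty
      exact ⟨t, ht, Nat.zero_le _⟩
    | succ N ih =>
      obtain ⟨t, htfib, htd⟩ := ih
      obtain ⟨t', ht'fib, ht'⟩ := hiSinf.exists_gt t
      refine ⟨t', ht'fib, ?_⟩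
      have h1 : ((P t).1 iS).2 + 1 ≤ ((P (t+1)).1 iS).2 := by
        rw [← htfib]
        exact le_of_eq (hdep t).symm
      have h2 : ((P (t+1)).1 iS).2 ≤ ((P t').1 iS).2 := hdmono iS (t+1) t' ht'
      omega
  -- all lengths become uniformly small
  have hsmall : ∀ ε : ℝ, 0 < ε → ∃ t, ∀ j ∈ F, ll lam (P t).1 j ≤ ε := by
    intro ε hε
    have hli0 := hl0 iS hiSF
    have hli1 : lam iS < 1 := lt_trans (hl1 iS hiSF) (by norm_num)
    obtain ⟨N, hN⟩ := exists_pow_lt_of_lt_one hε hli1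
    obtain ⟨t, htfib, htd⟩ := hdinf N
    refine ⟨t, fun j hj => ?_⟩
    have h1 : ll lam (P t).1 j ≤ ll lam (P t).1 (it t) := hmax t j hj
    rw [htfib] at h1
    have h2 : ll lam (P t).1 iS = lam iS ^ ((P t).1 iS).2 := rfl
    have h3 : lam iS ^ ((P t).1 iS).2 ≤ lam iS ^ N :=
      pow_le_pow_of_le_one hli0.le hli1.le htd
    calc ll lam (P t).1 j ≤ lam iS ^ ((P t).1 iS).2 := by rw [← h2]; exact h1
      _ ≤ lam iS ^ N := h3
      _ ≤ ε := hN.le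
  -- every coordinate's depth goes to infinity
  have hdall : ∀ j ∈ F, ∀ n : ℕ, ∃ t, n < ((P t).1 j).2 := by
    intro j hj n
    have hlj0 := hl0 j hj
    have hlj1 : lam j < 1 := lt_trans (hl1 j hj) (by norm_num)
    obtain ⟨t, ht⟩ := hsmall (lam j ^ (n+1)) (by positivity)
    refine ⟨t, ?_⟩
    by_contra hcon
    push_neg at hcon
    have h1 : lam j ^ n ≤ lam j ^ ((P t).1 j).2 :=
      pow_le_pow_of_le_one hlj0.le hlj1.le hcon
    have h2 : ll lam (P t).1 j ≤ lam j ^ (n+1) := ht j hj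
    have h3 : ll lam (P t).1 j = lam j ^ ((P t).1 j).2 := rfl
    have h4 : lam j ^ (n+1) < lam j ^ n := by
      rw [pow_succ]
      nlinarith [pow_pos hlj0 n]
    rw [h3] at h2
    linarith
  -- limit values
  have hclim : ∀ j, ∃ cj : ℝ, j ∈ F → (cj ∈ centralCantor (1 - 2 * lam j) ∧
      ∀ t, uu lam (P t).1 j ≤ cj ∧ cj ≤ uu lam (P t).1 j + ll lam (P t).1 j) := by
    intro j
    by_cases hj : j ∈ F
    · have hex : ∀ n : ℕ, ∃ t, n < ((P t).1 j).2 := hdall j hj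
      refine ⟨wval (lam j) (fun n => ((P (Nat.find (hex n))).1 j).1 n), fun _ => ?_⟩
      have hlj0 := hl0 j hj
      have hlj1 : lam j < 1 := lt_trans (hl1 j hj) (by norm_num)
      refine ⟨wval_mem hlj0 hlj1 _, fun t => ?_⟩
      have hagree : ∀ n < ((P t).1 j).2,
          (fun n => ((P (Nat.find (hex n))).1 j).1 n) n = ((P t).1 j).1 n := by
        intro n hn
        have hTle : Nat.find (hex n) ≤ t := Nat.find_min' (hex n) hn
        have hspec : n < ((P (Nat.find (hex n))).1 j).2 := Nat.find_spec (hex n)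
        exact (hbitchain j (Nat.find (hex n)) t hTle n hspec).symm
      have hpv : pval (lam j) (fun n => ((P (Nat.find (hex n))).1 j).1 n) (((P t).1 j).2)
          = uu lam (P t).1 j := pval_congr hagree
      obtain ⟨hlo, hhi⟩ := wval_between hlj0 hlj1
        (fun n => ((P (Nat.find (hex n))).1 j).1 n) (((P t).1 j).2)
      rw [hpv] at hlo hhi
      exact ⟨hlo, hhi⟩
    · exact ⟨1, fun h => absurd h hj⟩
  choose c hc using hclim
  have hcF : ∀ j ∈ F, c j ∈ centralCantor (1 - 2 * lam j) := fun j hj => (hc j hj).1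
  have hcbd : ∀ j ∈ F, ∀ t, uu lam (P t).1 j ≤ c j ∧ c j ≤ uu lam (P t).1 j + ll lam (P t).1 j :=
    fun j hj t => (hc j hj).2 t
  refine ⟨c, hcF, ?_⟩
  -- the product equals x
  have hboxes : ∀ t, ∏ i ∈ F, uu lam (P t).1 i ≤ x ∧ x ≤ ∏ i ∈ F, (uu lam (P t).1 i + ll lam (P t).1 i) :=
    fun t => ⟨(P t).2.2.2.1, (P t).2.2.2.2⟩
  have huu_pos : ∀ t, ∀ j ∈ F, 0 < uu lam (P t).1 j := by
    intro t j hj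
    have h1 := (P t).2.1 j hj
    have h2 := hl1 j hj
    linarith
  have hllpos : ∀ t, ∀ j ∈ F, 0 ≤ ll lam (P t).1 j := by
    intro t j hj
    have := (hl0 j hj).le
    show (0:ℝ) ≤ lam j ^ ((P t).1 j).2
    positivity
  have hple : ∀ t, ∀ j ∈ F, uu lam (P t).1 j + ll lam (P t).1 j ≤ 1 := by
    intro t j hj
    exact pval_le (hl0 j hj).le (by have := hl1 j hj; linarith) _ _
  have hcprod_bounds : ∀ t, ∏ i ∈ F, uu lam (P t).1 i ≤ ∏ i ∈ F, c i ∧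
      ∏ i ∈ F, c i ≤ ∏ i ∈ F, (uu lam (P t).1 i + ll lam (P t).1 i) := by
    intro t
    constructor
    · exact Finset.prod_le_prod (fun j hj => (huu_pos t j hj).le) (fun j hj => (hcbd j hj t).1)
    · exact Finset.prod_le_prod
        (fun j hj => le_trans (huu_pos t j hj).le (hcbd j hj t).1)
        (fun j hj => (hcbd j hj t).2)
  have habs : ∀ ε : ℝ, 0 < ε → |∏ i ∈ F, c i - x| ≤ (F.card : ℝ) * ε := by
    intro ε hε
    obtain ⟨t, ht⟩ := hsmall ε hε
    have hw : ∏ i ∈ F, (uu lam (P t).1 i + ll lam (P t).1 i) - ∏ i ∈ F, uu lam (P t).1 i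
        ≤ (F.card : ℝ) * ε := by
      have h1 : ∏ i ∈ F, (uu lam (P t).1 i + ll lam (P t).1 i)
          ≤ ∏ i ∈ F, uu lam (P t).1 i + ∑ i ∈ F, ll lam (P t).1 i :=
        prod_sub_le_sum (fun j hj => (huu_pos t j hj).le) (hllpos t) (hple t)
      have h2 : ∑ i ∈ F, ll lam (P t).1 i ≤ (F.card : ℝ) * ε := by
        calc ∑ i ∈ F, ll lam (P t).1 i ≤ ∑ _i ∈ F, ε := Finset.sum_le_sum (fun j hj => ht j hj)
          _ = (F.card : ℝ) * ε := by rw [Finset.sum_const, nsmul_eq_mul]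
      linarith
    obtain ⟨hb1, hb2⟩ := hboxes t
    obtain ⟨hc1, hc2⟩ := hcprod_bounds t
    rw [abs_le]
    constructor <;> linarith
  have : |∏ i ∈ F, c i - x| = 0 := by
    by_contra hne
    have hpos : 0 < |∏ i ∈ F, c i - x| := lt_of_le_of_ne (abs_nonneg _) (Ne.symm hne)
    have hcard : (0:ℝ) ≤ (F.card : ℝ) := Nat.cast_nonneg _
    have h2 : (0:ℝ) < 2 * ((F.card : ℝ) + 1) := by positivity
    have := habs (|∏ i ∈ F, c i - x| / (2 * ((F.card : ℝ) + 1))) (div_pos hpos h2)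
    have hdiv : (F.card : ℝ) / (2 * ((F.card : ℝ) + 1)) < 1 := by
      rw [div_lt_one h2]
      linarith
    have hfrac : (F.card : ℝ) * (|∏ i ∈ F, c i - x| / (2 * ((F.card : ℝ) + 1)))
        < |∏ i ∈ F, c i - x| := by
      calc (F.card : ℝ) * (|∏ i ∈ F, c i - x| / (2 * ((F.card : ℝ) + 1)))
          = |∏ i ∈ F, c i - x| * ((F.card : ℝ) / (2 * ((F.card : ℝ) + 1))) := by ring
        _ < |∏ i ∈ F, c i - x| * 1 := by exact mul_lt_mul_of_pos_left hdiv hpos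
        _ = |∏ i ∈ F, c i - x| := mul_one _
    linarith
  have := abs_eq_zero.mp this
  linarith [sub_eq_zero.mp this]

end CantorAux

set_option maxHeartbeats 3000000 in
open CantorAux in
/-- Theorem 6: products of elements of distinct central Cantor sets
`C_{α_1}, …, C_{α_n}, C_{β_1}, …, C_{β_p}` contain the two stated closed intervals. -/
theorem products_of_distinct_cantor_sets
    (n p n₁ n₂ r₁ r₂ : ℕ) (hn₁ : 0 < n₁) (hn₂ : 0 < n₂) (hr₁ : 0 < r₁) (hr₂ : 0 < r₂)
    (hn : n = n₁ + n₂) (hp : p = r₁ + r₂)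
    (a b : ℕ → ℝ) (ka kb : ℕ → ℕ)
    (ha : ∀ i ∈ Finset.Icc 1 n, a i ∈ Set.Ioo (0 : ℝ) 1)
    (hb : ∀ i ∈ Finset.Icc 1 p, b i ∈ Set.Ioo (0 : ℝ) 1)
    (hka : ∀ i ∈ Finset.Icc 1 n, 0 < ka i)
    (hkb : ∀ i ∈ Finset.Icc 1 p, 0 < kb i)
    (haMono : ∀ i j, 1 ≤ i → i ≤ j → j ≤ n → a j ≤ a i)
    (hbMono : ∀ i j, 1 ≤ i → i ≤ j → j ≤ p → b j ≤ b i)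
    (hab : a 1 = b 1)
    (χ : ℝ)
    (hχ : χ = (∏ i ∈ Finset.Icc 1 n, theta (a i) (ka i)) *
              ∏ i ∈ Finset.Icc 1 p, theta (b i) (kb i))
    (hα₁ : χ * ∑ i ∈ Finset.Icc 1 n₁, ((1 - a i) / 2) ^ 2 > (3 * a 1 - 1) / (1 + a 1))
    (hα₂ : χ * ∑ i ∈ Finset.Icc (n₁ + 1) (n₁ + n₂), ((1 - a i) / 2) > 1)
    (hβ₁ : χ * ∑ i ∈ Finset.Icc 1 r₁, ((1 - b i) / 2) ^ 2 > (3 * b 1 - 1) / (1 + b 1))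
    (hβ₂ : χ * ∑ i ∈ Finset.Icc (r₁ + 1) (r₁ + r₂), ((1 - b i) / 2) > 1) :
    Set.Icc ((∏ i ∈ Finset.Icc 1 p, theta (b i) (kb i)) * theta (a 1) (ka 1))
        (∏ i ∈ Finset.Icc 2 p, theta (b i) (kb i))
      ⊆ {x : ℝ | ∃ c d : ℕ → ℝ,
          (∀ i ∈ Finset.Icc 1 n, c i ∈ centralCantor (a i)) ∧
          (∀ i ∈ Finset.Icc 1 p, d i ∈ centralCantor (b i)) ∧
          x = (∏ i ∈ Finset.Icc 1 n, c i) * ∏ i ∈ Finset.Icc 1 p, d i} ∧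
    Set.Icc ((∏ i ∈ Finset.Icc 1 n, theta (a i) (ka i)) * theta (b 1) (kb 1))
        (∏ i ∈ Finset.Icc 2 n, theta (a i) (ka i))
      ⊆ {x : ℝ | ∃ c d : ℕ → ℝ,
          (∀ i ∈ Finset.Icc 1 n, c i ∈ centralCantor (a i)) ∧
          (∀ i ∈ Finset.Icc 1 p, d i ∈ centralCantor (b i)) ∧
          x = (∏ i ∈ Finset.Icc 1 n, c i) * ∏ i ∈ Finset.Icc 1 p, d i} := by
  classical
  set lam : ℕ ⊕ ℕ → ℝ := Sum.elim (fun i => (1 - a i) / 2) (fun j => (1 - b j) / 2) with hlam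
  set kk : ℕ ⊕ ℕ → ℕ := Sum.elim ka kb with hkk
  set F : Finset (ℕ ⊕ ℕ) := (Finset.Icc 1 n).disjSum (Finset.Icc 1 p) with hFdef
  have h1n : (1:ℕ) ∈ Finset.Icc 1 n := by simp; omega
  have h1p : (1:ℕ) ∈ Finset.Icc 1 p := by simp; omega
  have hFne : F.Nonempty := ⟨Sum.inl 1, Finset.inl_mem_disjSum.mpr h1n⟩
  have hl0 : ∀ i ∈ F, 0 < lam i := by
    intro i hi
    rcases i with i | j
    · have := (ha i (Finset.inl_mem_disjSum.mp hi)).2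
      show (0:ℝ) < (1 - a i) / 2
      linarith
    · have := (hb j (Finset.inr_mem_disjSum.mp hi)).2
      show (0:ℝ) < (1 - b j) / 2
      linarith
  have hl1 : ∀ i ∈ F, lam i < 1/2 := by
    intro i hi
    rcases i with i | j
    · have := (ha i (Finset.inl_mem_disjSum.mp hi)).1
      show (1 - a i) / 2 < 1/2
      linarith
    · have := (hb j (Finset.inr_mem_disjSum.mp hi)).1
      show (1 - b j) / 2 < 1/2
      linarith
  have hlamlt1 : ∀ i ∈ F, lam i < 1 := fun i hi => lt_trans (hl1 i hi) (by norm_num)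
  have hkk1 : ∀ i ∈ F, 1 ≤ kk i := by
    intro i hi
    rcases i with i | j
    · exact hka i (Finset.inl_mem_disjSum.mp hi)
    · exact hkb j (Finset.inr_mem_disjSum.mp hi)
  -- bounds on thetas
  have hθa : ∀ i ∈ Finset.Icc 1 n, 0 ≤ theta (a i) (ka i) ∧ theta (a i) (ka i) ≤ 1 := by
    intro i hi
    have h1 := (ha i hi).1
    have h2 := (ha i hi).2
    have hl : (0:ℝ) < (1 - a i)/2 := by linarith
    have hle : ((1 - a i)/2) ^ ka i ≤ ((1 - a i)/2) ^ 1 :=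
      pow_le_pow_of_le_one hl.le (by linarith) (hka i hi)
    rw [pow_one] at hle
    have hpos : (0:ℝ) < ((1 - a i)/2) ^ ka i := pow_pos hl _
    constructor
    · show (0:ℝ) ≤ 1 - ((1 - a i)/2) ^ ka i; linarith
    · show 1 - ((1 - a i)/2) ^ ka i ≤ 1; linarith
  have hθb : ∀ j ∈ Finset.Icc 1 p, 0 ≤ theta (b j) (kb j) ∧ theta (b j) (kb j) ≤ 1 := by
    intro j hj
    have h1 := (hb j hj).1
    have h2 := (hb j hj).2
    have hl : (0:ℝ) < (1 - b j)/2 := by linarith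
    have hle : ((1 - b j)/2) ^ kb j ≤ ((1 - b j)/2) ^ 1 :=
      pow_le_pow_of_le_one hl.le (by linarith) (hkb j hj)
    rw [pow_one] at hle
    have hpos : (0:ℝ) < ((1 - b j)/2) ^ kb j := pow_pos hl _
    constructor
    · show (0:ℝ) ≤ 1 - ((1 - b j)/2) ^ kb j; linarith
    · show 1 - ((1 - b j)/2) ^ kb j ≤ 1; linarith
  have hprodam : ∀ (s : Finset ℕ), (∀ i ∈ s, i ∈ Finset.Icc 1 n) →
      0 ≤ ∏ i ∈ s, theta (a i) (ka i) ∧ ∏ i ∈ s, theta (a i) (ka i) ≤ 1 := by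
    intro s hs
    exact ⟨Finset.prod_nonneg (fun i hi => (hθa i (hs i hi)).1),
      Finset.prod_le_one (fun i hi => (hθa i (hs i hi)).1) (fun i hi => (hθa i (hs i hi)).2)⟩
  have hprodbm : ∀ (s : Finset ℕ), (∀ j ∈ s, j ∈ Finset.Icc 1 p) →
      0 ≤ ∏ j ∈ s, theta (b j) (kb j) ∧ ∏ j ∈ s, theta (b j) (kb j) ≤ 1 := by
    intro s hs
    exact ⟨Finset.prod_nonneg (fun i hi => (hθb i (hs i hi)).1),
      Finset.prod_le_one (fun i hi => (hθb i (hs i hi)).1) (fun i hi => (hθb i (hs i hi)).2)⟩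
  have hχ0 : 0 ≤ χ := by
    rw [hχ]
    exact mul_nonneg (hprodam _ (fun i hi => hi)).1 (hprodbm _ (fun j hj => hj)).1
  have hχ1 : χ ≤ 1 := by
    rw [hχ]
    have ha' := hprodam _ (fun i (hi : i ∈ Finset.Icc 1 n) => hi)
    have hb' := hprodbm _ (fun j (hj : j ∈ Finset.Icc 1 p) => hj)
    nlinarith [ha'.1, ha'.2, hb'.1, hb'.2]
  -- the two sum conditions
  have hSa : 1 < ∑ i ∈ Finset.Icc (n₁+1) n, (1 - a i)/2 := by
    have h := hα₂
    rw [← hn] at h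
    by_contra hcon
    push_neg at hcon
    have hS0 : 0 < ∑ i ∈ Finset.Icc (n₁+1) n, (1 - a i)/2 := by nlinarith
    nlinarith
  have hSb : 1 < ∑ j ∈ Finset.Icc (r₁+1) p, (1 - b j)/2 := by
    have h := hβ₂
    rw [← hp] at h
    by_contra hcon
    push_neg at hcon
    have hS0 : 0 < ∑ j ∈ Finset.Icc (r₁+1) p, (1 - b j)/2 := by nlinarith
    nlinarith
  -- choose the window depths
  set M₀ := F.sup' hFne (fun i => lam i ^ kk i) with hM₀def
  have hM₀le : ∀ i ∈ F, lam i ^ kk i ≤ M₀ := by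
    intro i hi
    rw [hM₀def]
    exact Finset.le_sup' (fun i => lam i ^ kk i) hi
  have hM₀pos : 0 < M₀ :=
    lt_of_lt_of_le (pow_pos (hl0 _ (Finset.inl_mem_disjSum.mpr h1n)) (kk (Sum.inl 1)))
      (hM₀le _ (Finset.inl_mem_disjSum.mpr h1n))
  have hM₀1 : M₀ ≤ 1 := by
    apply Finset.sup'_le
    intro i hi
    exact pow_le_one₀ (hl0 i hi).le (hlamlt1 i hi).le
  have hmex : ∀ i, i ∈ F → ∃ t : ℕ, lam i ^ (t+1) ≤ M₀ := by
    intro i hi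
    obtain ⟨nn, hnn⟩ := exists_pow_lt_of_lt_one hM₀pos (hlamlt1 i hi)
    refine ⟨nn, le_trans ?_ hnn.le⟩
    exact pow_le_pow_of_le_one (hl0 i hi).le (hlamlt1 i hi).le (Nat.le_succ nn)
  have hmchoice : ∀ i, ∃ mi : ℕ, 1 ≤ mi ∧ (i ∈ F →
      (lam i ^ mi ≤ M₀ ∧ lam i * M₀ ≤ lam i ^ mi ∧ mi ≤ kk i)) := by
    intro i
    by_cases hi : i ∈ F
    · refine ⟨Nat.find (hmex i hi) + 1, by omega, fun _ => ⟨Nat.find_spec (hmex i hi), ?_, ?_⟩⟩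
      · rcases Nat.eq_zero_or_pos (Nat.find (hmex i hi)) with h0 | hposf
        · rw [h0, pow_one]
          exact mul_le_of_le_one_right (hl0 i hi).le hM₀1
        · have hf1 : ¬ lam i ^ ((Nat.find (hmex i hi) - 1) + 1) ≤ M₀ :=
            Nat.find_min (hmex i hi) (by omega)
          push_neg at hf1
          have heq : (Nat.find (hmex i hi) - 1) + 1 = Nat.find (hmex i hi) := by omega
          rw [heq] at hf1
          have : lam i * M₀ < lam i * lam i ^ Nat.find (hmex i hi) :=
            mul_lt_mul_of_pos_left hf1 (hl0 i hi)
          rw [← pow_succ'] at this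
          exact this.le
      · have hkik : lam i ^ ((kk i - 1) + 1) ≤ M₀ := by
          have heq : (kk i - 1) + 1 = kk i := by have := hkk1 i hi; omega
          rw [heq]
          exact hM₀le i hi
        have := Nat.find_min' (hmex i hi) hkik
        have h1 := hkk1 i hi
        omega
    · exact ⟨1, le_refl 1, fun h => absurd h hi⟩
  choose m hm1 hmF using hmchoice
  have hwin : ∀ i ∈ F, ∀ j ∈ F, lam i * lam j ^ m j ≤ lam i ^ m i := by
    intro i hi j hj
    calc lam i * lam j ^ m j ≤ lam i * M₀ :=
          mul_le_mul_of_nonneg_left ((hmF j hj).1) (hl0 i hi).le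
      _ ≤ lam i ^ m i := (hmF i hi).2.1
  have hsum : ∀ i ∈ F, (1:ℝ) ≤ ∑ j ∈ F.erase i, lam j := by
    intro i hi
    have hnn : ∀ z ∈ F.erase i, 0 ≤ lam z := fun z hz => (hl0 z (Finset.mem_of_mem_erase hz)).le
    rcases i with i0 | j0
    · have hsub : (Finset.Icc (r₁+1) p).map ⟨Sum.inr, Sum.inr_injective⟩ ⊆ F.erase (Sum.inl i0) := by
        intro z hz
        obtain ⟨j, hj, rfl⟩ := Finset.mem_map.mp hz
        refine Finset.mem_erase.mpr ⟨by simp, ?_⟩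
        apply Finset.inr_mem_disjSum.mpr
        simp only [Finset.mem_Icc] at hj ⊢
        omega
      have hmm : ∑ z ∈ (Finset.Icc (r₁+1) p).map ⟨Sum.inr, Sum.inr_injective⟩, lam z
          = ∑ j ∈ Finset.Icc (r₁+1) p, (1 - b j)/2 := by
        rw [Finset.sum_map]
        rfl
      have hle := Finset.sum_le_sum_of_subset_of_nonneg hsub (fun z hz _ => hnn z hz)
      rw [hmm] at hle
      linarith
    · have hsub : (Finset.Icc (n₁+1) n).map ⟨Sum.inl, Sum.inl_injective⟩ ⊆ F.erase (Sum.inr j0) := by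
        intro z hz
        obtain ⟨j, hj, rfl⟩ := Finset.mem_map.mp hz
        refine Finset.mem_erase.mpr ⟨by simp, ?_⟩
        apply Finset.inl_mem_disjSum.mpr
        simp only [Finset.mem_Icc] at hj ⊢
        omega
      have hmm : ∑ z ∈ (Finset.Icc (n₁+1) n).map ⟨Sum.inl, Sum.inl_injective⟩, lam z
          = ∑ j ∈ Finset.Icc (n₁+1) n, (1 - a j)/2 := by
        rw [Finset.sum_map]
        rfl
      have hle := Finset.sum_le_sum_of_subset_of_nonneg hsub (fun z hz _ => hnn z hz)
      rw [hmm] at hle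
      linarith
  -- the product of the initial bottoms is at most χ
  have hprodkk : ∏ i ∈ F, (1 - lam i ^ kk i) = χ := by
    rw [hχ, hFdef, Finset.prod_disjSum]
    rfl
  have hprodm_le : ∏ i ∈ F, (1 - lam i ^ m i) ≤ χ := by
    rw [← hprodkk]
    apply Finset.prod_le_prod
    · intro i hi
      have h1 : lam i ^ m i ≤ 1 := pow_le_one₀ (hl0 i hi).le (hlamlt1 i hi).le
      linarith
    · intro i hi
      have h2 : lam i ^ kk i ≤ lam i ^ m i :=
        pow_le_pow_of_le_one (hl0 i hi).le (hlamlt1 i hi).le (hmF i hi).2.2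
      linarith
  -- the common covering statement
  have hcover : ∀ x : ℝ, χ ≤ x → x ≤ 1 →
      ∃ c d : ℕ → ℝ,
        (∀ i ∈ Finset.Icc 1 n, c i ∈ centralCantor (a i)) ∧
        (∀ i ∈ Finset.Icc 1 p, d i ∈ centralCantor (b i)) ∧
        x = (∏ i ∈ Finset.Icc 1 n, c i) * ∏ i ∈ Finset.Icc 1 p, d i := by
    intro x hx1 hx2
    obtain ⟨cc, hccmem, hccprod⟩ := CantorAux.main_cover F lam m hl0 hl1 (fun i _ => hm1 i)
      hwin hsum x (le_trans hprodm_le hx1) hx2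
    refine ⟨fun i => cc (Sum.inl i), fun j => cc (Sum.inr j), ?_, ?_, ?_⟩
    · intro i hi
      have hmem := hccmem (Sum.inl i) (Finset.inl_mem_disjSum.mpr hi)
      have heq : 1 - 2 * lam (Sum.inl i) = a i := by
        show 1 - 2 * ((1 - a i)/2) = a i
        ring
      rwa [heq] at hmem
    · intro j hj
      have hmem := hccmem (Sum.inr j) (Finset.inr_mem_disjSum.mpr hj)
      have heq : 1 - 2 * lam (Sum.inr j) = b j := by
        show 1 - 2 * ((1 - b j)/2) = b j
        ring
      rwa [heq] at hmem
    · rw [← hccprod, hFdef, Finset.prod_disjSum]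
  -- splitting the a- and b-products at the first index
  have hsplita : ∏ i ∈ Finset.Icc 1 n, theta (a i) (ka i)
      = theta (a 1) (ka 1) * ∏ i ∈ Finset.Icc 2 n, theta (a i) (ka i) := by
    have h : Finset.Icc 1 n = insert 1 (Finset.Icc 2 n) := by
      ext z; simp only [Finset.mem_Icc, Finset.mem_insert]; omega
    rw [h, Finset.prod_insert (by simp)]
  have hsplitb : ∏ j ∈ Finset.Icc 1 p, theta (b j) (kb j)
      = theta (b 1) (kb 1) * ∏ j ∈ Finset.Icc 2 p, theta (b j) (kb j) := by
    have h : Finset.Icc 1 p = insert 1 (Finset.Icc 2 p) := by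
      ext z; simp only [Finset.mem_Icc, Finset.mem_insert]; omega
    rw [h, Finset.prod_insert (by simp)]
  have hIcc2n : ∀ i ∈ Finset.Icc 2 n, i ∈ Finset.Icc 1 n := by
    intro i hi; simp only [Finset.mem_Icc] at hi ⊢; omega
  have hIcc2p : ∀ j ∈ Finset.Icc 2 p, j ∈ Finset.Icc 1 p := by
    intro j hj; simp only [Finset.mem_Icc] at hj ⊢; omega
  constructor
  · intro x hx
    obtain ⟨hxl, hxu⟩ := Set.mem_Icc.mp hx
    have hχL : χ ≤ (∏ i ∈ Finset.Icc 1 p, theta (b i) (kb i)) * theta (a 1) (ka 1) := by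
      rw [hχ, hsplita]
      have h2n := hprodam _ hIcc2n
      have hbp := hprodbm _ (fun j (hj : j ∈ Finset.Icc 1 p) => hj)
      have hθa1 := hθa 1 h1n
      nlinarith [h2n.1, h2n.2, hbp.1, hbp.2, hθa1.1, hθa1.2,
        mul_nonneg (mul_nonneg hθa1.1 hbp.1)
          (by linarith [h2n.2] : (0:ℝ) ≤ 1 - ∏ i ∈ Finset.Icc 2 n, theta (a i) (ka i))]
    have hU1 : (∏ i ∈ Finset.Icc 2 p, theta (b i) (kb i)) ≤ 1 := (hprodbm _ hIcc2p).2
    exact hcover x (le_trans hχL hxl) (le_trans hxu hU1)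
  · intro x hx
    obtain ⟨hxl, hxu⟩ := Set.mem_Icc.mp hx
    have hχL : χ ≤ (∏ i ∈ Finset.Icc 1 n, theta (a i) (ka i)) * theta (b 1) (kb 1) := by
      rw [hχ, hsplitb]
      have h2p := hprodbm _ hIcc2p
      have hap := hprodam _ (fun i (hi : i ∈ Finset.Icc 1 n) => hi)
      have hθb1 := hθb 1 h1p
      nlinarith [h2p.1, h2p.2, hap.1, hap.2, hθb1.1, hθb1.2,
        mul_nonneg (mul_nonneg hθb1.1 hap.1)
          (by linarith [h2p.2] : (0:ℝ) ≤ 1 - ∏ j ∈ Finset.Icc 2 p, theta (b j) (kb j))]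
    have hU1 : (∏ i ∈ Finset.Icc 2 n, theta (a i) (ka i)) ≤ 1 := (hprodam _ hIcc2n).2
    exact hcover x (le_trans hχL hxl) (le_trans hxu hU1)
end

section
/- Let α ∈ (0,1), and let φ : ℝ → ℝ be continuously differentiable and monotone increasing on [(1+α)/2, 1], with constants 0 < g_2 ≤ g_1 such that g_2 ≤ φ'(x) ≤ g_1 for all x ∈ [(1+α)/2, 1]. Set s_{α,φ} = ⌈g_1/g_2⌉, k_{α,φ} = ⌈ ((3α−1)/2) / ( (g_2/g_1)·((1−α²)/4) ) ⌉ if α > 1/3 and k_{α,φ} = 0 if α ≤ 1/3, and r_{α,φ} = 2s_{α,φ} + 2k_{α,φ}. Then the closed interval [ (r_{α,φ}/2 − 1)·φ(1) + (r_{α,φ}/2 + 1)·φ((1+α)/2) , (r_{α,φ}/2 + 1)·φ(1) + (r_{α,φ}/2 − 1)·φ((1+α)/2) ] is contained in the set Γ_{α,φ} = { Σ_{k=1}^{r_{α,φ}} φ(c_k) : c_k ∈ C_α }. -/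
open scoped BigOperators


/-- `s_{α,φ} = ⌈g₁/g₂⌉`. -/
noncomputable def sPhi (g₁ g₂ : ℝ) : ℕ := ⌈g₁ / g₂⌉₊

/-- `k_{α,φ}`. -/
noncomputable def kPhi (α g₁ g₂ : ℝ) : ℕ :=
  if 1 / 3 < α then ⌈((3 * α - 1) / 2) / ((g₂ / g₁) * ((1 - α ^ 2) / 4))⌉₊ else 0

/-- `r_{α,φ} = 2 s_{α,φ} + 2 k_{α,φ}`. -/
noncomputable def rPhi (α g₁ g₂ : ℝ) : ℕ := 2 * sPhi g₁ g₂ + 2 * kPhi α g₁ g₂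


namespace SumsAux

attribute [local instance] Classical.propDecidable

/-- `q = (1-α)/2`. -/
noncomputable def qv (α : ℝ) : ℝ := (1 - α) / 2
/-- `a = (1+α)/2`. -/
noncomputable def av (α : ℝ) : ℝ := (1 + α) / 2

/-- Depth of coordinate `j` at time `t` in the round-robin refinement. -/
def Dp (r j t : ℕ) : ℕ := (t + (r - 1 - j)) / r

theorem small_div {r m : ℕ} (hr : 0 < r) (hm : m < 2 * r) :
    m / r = if r ≤ m then 1 else 0 := by
  rcases Nat.lt_or_ge m r with h | h
  · rw [if_neg (by omega), Nat.div_eq_of_lt h]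
  · rw [if_pos h]
    have hm2 : m = (m - r) + 1 * r := by omega
    rw [hm2, Nat.add_mul_div_right _ _ hr, Nat.div_eq_of_lt (by omega)]

theorem Dp_eq {r : ℕ} (hr : 0 < r) (j t : ℕ) :
    Dp r j t = (t % r + (r - 1 - j)) / r + t / r := by
  have ht : t % r + r * (t / r) = t := Nat.mod_add_div t r
  unfold Dp
  conv_lhs => rw [← ht]
  have h1 : t % r + r * (t / r) + (r - 1 - j) = (t % r + (r - 1 - j)) + r * (t / r) := by omega
  rw [h1, Nat.add_mul_div_left _ _ hr]

theorem Dp_mod {r : ℕ} (hr : 0 < r) (t : ℕ) : Dp r (t % r) t = t / r := by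
  have hi : t % r < r := Nat.mod_lt t hr
  rw [Dp_eq hr]
  rw [Nat.div_eq_of_lt (by omega), Nat.zero_add]

theorem Dp_le {r : ℕ} (hr : 0 < r) (j t : ℕ) : Dp r j t ≤ t / r + 1 := by
  have hi : t % r < r := Nat.mod_lt t hr
  rw [Dp_eq hr]
  have h2 : (t % r + (r - 1 - j)) / r ≤ 1 := by
    rw [small_div hr (by omega)]; split <;> omega
  omega

theorem succ_mod_div {r : ℕ} (hr : 0 < r) (t : ℕ) :
    (t % r + 1 < r → (t + 1) % r = t % r + 1 ∧ (t + 1) / r = t / r) ∧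
    (t % r + 1 = r → (t + 1) % r = 0 ∧ (t + 1) / r = t / r + 1) := by
  have ht : t % r + r * (t / r) = t := Nat.mod_add_div t r
  constructor
  · intro h
    have e0 : t + 1 = (t % r + 1) + r * (t / r) := by omega
    rw [e0, Nat.add_mul_mod_self_left, Nat.add_mul_div_left _ _ hr,
      Nat.mod_eq_of_lt h, Nat.div_eq_of_lt h, Nat.zero_add]
    exact ⟨rfl, rfl⟩
  · intro h
    have e0 : t + 1 = r * (t / r + 1) := by
      have : r * (t / r + 1) = r * (t / r) + r := by ring
      omega
    rw [e0, Nat.mul_mod_right, Nat.mul_div_cancel_left _ hr]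
    exact ⟨rfl, rfl⟩

theorem Dp_succ {r : ℕ} (hr : 0 < r) {j : ℕ} (hj : j < r) (t : ℕ) :
    Dp r j (t + 1) = Dp r j t + if j = t % r then 1 else 0 := by
  have hi : t % r < r := Nat.mod_lt t hr
  rcases Nat.lt_or_ge (t % r + 1) r with h | h
  · obtain ⟨e1, e2⟩ := (succ_mod_div hr t).1 h
    rw [Dp_eq hr j (t+1), Dp_eq hr j t, e1, e2,
      small_div hr (show t % r + 1 + (r - 1 - j) < 2*r by omega),
      small_div hr (show t % r + (r - 1 - j) < 2*r by omega)]
    split_ifs <;> omega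
  · have h' : t % r + 1 = r := by omega
    obtain ⟨e1, e2⟩ := (succ_mod_div hr t).2 h'
    rw [Dp_eq hr j (t+1), Dp_eq hr j t, e1, e2,
      Nat.div_eq_of_lt (show 0 + (r - 1 - j) < r by omega),
      small_div hr (show t % r + (r - 1 - j) < 2*r by omega)]
    split_ifs <;> omega

theorem addmul_mod {r m n : ℕ} (hm : m < r) : (n * r + m) % r = m := by
  rw [Nat.add_comm, Nat.mul_comm, Nat.add_mul_mod_self_left, Nat.mod_eq_of_lt hm]

theorem addmul_div {r m n : ℕ} (hr : 0 < r) (hm : m < r) : (n * r + m) / r = n := by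
  rw [Nat.add_comm, Nat.mul_comm, Nat.add_mul_div_left _ _ hr, Nat.div_eq_of_lt hm, Nat.zero_add]

theorem Dp_mul {r : ℕ} (hr : 0 < r) (j n : ℕ) : Dp r j (n * r) = n := by
  have h0 : (n * r) % r = 0 := by rw [Nat.mul_mod_left]
  have h1 : (n * r) / r = n := Nat.mul_div_cancel _ hr
  rw [Dp_eq hr, h0, h1, Nat.zero_add, Nat.div_eq_of_lt (by omega), Nat.zero_add]


/-- The branching condition: given current left endpoints `L` at time `t`, can the
point `x` still be reached if coordinate `j` takes digit `0`? -/
noncomputable def condP (α : ℝ) (φ : ℝ → ℝ) (r : ℕ) (x : ℝ) (t : ℕ) (L : Fin r → ℝ)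
    (j : Fin r) : Prop :=
  x ≤ (∑ k, φ (L k + qv α ^ (1 + Dp r k t)))
      - φ (L j + qv α ^ (1 + Dp r j t)) + φ (L j + qv α ^ (2 + Dp r j t))

/-- Left endpoints of the nested intervals, refined round-robin. -/
noncomputable def cL (α : ℝ) (φ : ℝ → ℝ) (r : ℕ) (x : ℝ) : ℕ → Fin r → ℝ
  | 0 => fun _ => av α
  | (t+1) => fun j =>
      if (j : ℕ) = t % r ∧ ¬ condP α φ r x t (cL α φ r x t) j then
        cL α φ r x t j + av α * qv α ^ (1 + Dp r (j : ℕ) t)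
      else cL α φ r x t j

theorem cL_zero (α : ℝ) (φ : ℝ → ℝ) (r : ℕ) (x : ℝ) (j : Fin r) :
    cL α φ r x 0 j = av α := rfl

theorem cL_succ_ne (α : ℝ) (φ : ℝ → ℝ) (r : ℕ) (x : ℝ) (t : ℕ) (j : Fin r)
    (h : (j : ℕ) ≠ t % r) : cL α φ r x (t+1) j = cL α φ r x t j := by
  show (if (j : ℕ) = t % r ∧ ¬ condP α φ r x t (cL α φ r x t) j then _ else _) = _
  rw [if_neg (by tauto)]

theorem cL_succ_pos (α : ℝ) (φ : ℝ → ℝ) (r : ℕ) (x : ℝ) (t : ℕ) (i : Fin r)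
    (hi : (i : ℕ) = t % r) (hc : condP α φ r x t (cL α φ r x t) i) (j : Fin r) :
    cL α φ r x (t+1) j = cL α φ r x t j := by
  show (if (j : ℕ) = t % r ∧ ¬ condP α φ r x t (cL α φ r x t) j then _ else _) = _
  by_cases hji : j = i
  · subst hji; rw [if_neg (by tauto)]
  · rw [if_neg]
    rintro ⟨h1, -⟩
    exact hji (Fin.ext (h1.trans hi.symm))

theorem cL_succ_neg (α : ℝ) (φ : ℝ → ℝ) (r : ℕ) (x : ℝ) (t : ℕ) (i : Fin r)
    (hi : (i : ℕ) = t % r) (hc : ¬ condP α φ r x t (cL α φ r x t) i) (j : Fin r) :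
    cL α φ r x (t+1) j =
      if j = i then cL α φ r x t i + av α * qv α ^ (1 + Dp r (i:ℕ) t) else cL α φ r x t j := by
  show (if (j : ℕ) = t % r ∧ ¬ condP α φ r x t (cL α φ r x t) j then _ else _) = _
  by_cases hji : j = i
  · subst hji; rw [if_pos ⟨hi, hc⟩, if_pos rfl]
  · rw [if_neg (by rintro ⟨h1, -⟩; exact hji (Fin.ext (h1.trans hi.symm))), if_neg hji]


theorem av_add_qv (α : ℝ) : av α + qv α = 1 := by unfold av qv; ring
theorem av_sub_qv (α : ℝ) : av α - qv α = α := by unfold av qv; ring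

section Invariant

variable {α : ℝ} {φ : ℝ → ℝ} {g₁ g₂ : ℝ} {r : ℕ} {x : ℝ}

theorem invariant (hα0 : 0 < α) (hα1 : α < 1) (hg₂ : 0 < g₂) (hg : g₂ ≤ g₁)
    (hr2 : 2 ≤ r)
    (hkey : g₁ * α ≤ ((r:ℝ) - 1) * (g₂ * qv α))
    (Hup : ∀ u v : ℝ, av α ≤ u → u ≤ v → v ≤ 1 → φ v - φ u ≤ g₁ * (v - u))
    (Hlow : ∀ u v : ℝ, av α ≤ u → u ≤ v → v ≤ 1 → g₂ * (v - u) ≤ φ v - φ u)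
    (hx1 : (r:ℝ) * φ (av α) ≤ x) (hx2 : x ≤ (r:ℝ) * φ 1) : ∀ t : ℕ,
    (∀ j : Fin r, av α ≤ cL α φ r x t j ∧ cL α φ r x t j + qv α ^ (1 + Dp r (j:ℕ) t) ≤ 1)
    ∧ (∑ j, φ (cL α φ r x t j)) ≤ x
    ∧ x ≤ ∑ j, φ (cL α φ r x t j + qv α ^ (1 + Dp r (j:ℕ) t)) := by
  have hr0 : 0 < r := by omega
  have hq0 : 0 < qv α := by unfold qv; linarith
  have hq1 : qv α < 1 := by unfold qv; linarith
  have ha1 : av α ≤ 1 := by unfold av; linarith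
  have ha0 : 0 < av α := by unfold av; linarith
  have haq : av α + qv α = 1 := av_add_qv α
  have hqa : qv α ≤ av α := by unfold av qv; linarith
  intro t
  induction t with
  | zero =>
    have hD0 : ∀ j : Fin r, Dp r (j:ℕ) 0 = 0 := by
      intro j
      have := j.isLt
      exact Nat.div_eq_of_lt (by omega)
    have hsum1 : (∑ _j : Fin r, φ (av α)) = (r:ℝ) * φ (av α) := by
      rw [Finset.sum_const, Finset.card_univ, Fintype.card_fin, nsmul_eq_mul]
    have hsum2 : (∑ _j : Fin r, φ (1:ℝ)) = (r:ℝ) * φ 1 := by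
      rw [Finset.sum_const, Finset.card_univ, Fintype.card_fin, nsmul_eq_mul]
    refine ⟨fun j => ?_, ?_, ?_⟩
    · rw [cL_zero, hD0 j, pow_one]
      exact ⟨le_refl _, by linarith⟩
    · calc (∑ j : Fin r, φ (cL α φ r x 0 j)) = ∑ _j : Fin r, φ (av α) :=
            Finset.sum_congr rfl (fun j _ => by rw [cL_zero])
        _ = (r:ℝ) * φ (av α) := hsum1
        _ ≤ x := hx1
    · calc x ≤ (r:ℝ) * φ 1 := hx2
        _ = ∑ _j : Fin r, φ (1:ℝ) := hsum2.symm
        _ = ∑ j : Fin r, φ (cL α φ r x 0 j + qv α ^ (1 + Dp r (j:ℕ) 0)) :=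
            Finset.sum_congr rfl (fun j _ => by rw [cL_zero, hD0 j, pow_one, haq])
  | succ t ih =>
    obtain ⟨hB, hlo, hhi⟩ := ih
    set i : Fin r := ⟨t % r, Nat.mod_lt t hr0⟩ with hidef
    have hiv : (i : ℕ) = t % r := rfl
    have hDi : Dp r (i:ℕ) t = t / r := by rw [hiv]; exact Dp_mod hr0 t
    set n := t / r with hn
    have hD : ∀ j : Fin r, Dp r (j:ℕ) (t+1) = Dp r (j:ℕ) t + if (j:ℕ) = t % r then 1 else 0 :=
      fun j => Dp_succ hr0 j.isLt t
    have hne : ∀ j : Fin r, j ≠ i → (j:ℕ) ≠ t % r := by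
      intro j hj hjv
      exact hj (Fin.ext (hjv.trans hiv.symm))
    have hsplit : ∀ f : Fin r → ℝ, ∑ j, f j = f i + ∑ j ∈ Finset.univ.erase i, f j :=
      fun f => (Finset.add_sum_erase _ f (Finset.mem_univ i)).symm
    have hpowle : ∀ m k : ℕ, m ≤ k → qv α ^ k ≤ qv α ^ m :=
      fun m k h => pow_le_pow_of_le_one hq0.le hq1.le h
    have hDle : ∀ j : Fin r, Dp r (j:ℕ) t ≤ n + 1 := fun j => Dp_le hr0 _ t
    by_cases hc : condP α φ r x t (cL α φ r x t) i
    · -- digit 0 chosen for coordinate i : all left endpoints unchanged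
      have hLeq : ∀ j, cL α φ r x (t+1) j = cL α φ r x t j := cL_succ_pos α φ r x t i hiv hc
      have hDj : ∀ j : Fin r, j ≠ i → Dp r (j:ℕ) (t+1) = Dp r (j:ℕ) t := by
        intro j hj; rw [hD j, if_neg (hne j hj), Nat.add_zero]
      have hDii : Dp r (i:ℕ) (t+1) = n + 1 := by rw [hD i, if_pos hiv, hDi]
      refine ⟨fun j => ?_, ?_, ?_⟩
      · rw [hLeq j]
        refine ⟨(hB j).1, ?_⟩
        by_cases hj : j = i
        · rw [hj]
          have h2 := (hB i).2
          have h3 : qv α ^ (1 + Dp r (i:ℕ) (t+1)) ≤ qv α ^ (1 + Dp r (i:ℕ) t) := by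
            refine hpowle _ _ ?_
            rw [hDii, hDi]; omega
          linarith
        · rw [hDj j hj]; exact (hB j).2
      · calc (∑ j, φ (cL α φ r x (t+1) j)) = ∑ j, φ (cL α φ r x t j) :=
              Finset.sum_congr rfl (fun j _ => by rw [hLeq j])
          _ ≤ x := hlo
      · have hcond := hc
        unfold condP at hcond
        rw [hsplit (fun k => φ (cL α φ r x t k + qv α ^ (1 + Dp r (k:ℕ) t)))] at hcond
        have hNU : (∑ j, φ (cL α φ r x (t+1) j + qv α ^ (1 + Dp r (j:ℕ) (t+1))))
            = φ (cL α φ r x t i + qv α ^ (2 + n))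
              + ∑ j ∈ Finset.univ.erase i, φ (cL α φ r x t j + qv α ^ (1 + Dp r (j:ℕ) t)) := by
          rw [hsplit (fun j => φ (cL α φ r x (t+1) j + qv α ^ (1 + Dp r (j:ℕ) (t+1))))]
          congr 1
          · rw [hLeq i, hDii, show 1 + (n+1) = 2 + n from by omega]
          · refine Finset.sum_congr rfl (fun j hj => ?_)
            have hj' : j ≠ i := (Finset.mem_erase.mp hj).1
            rw [hLeq j, hDj j hj']
        rw [hNU]
        rw [hDi] at hcond
        linarith
    · -- digit 1 chosen for coordinate i
      have hLeq := cL_succ_neg α φ r x t i hiv hc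
      have hDj : ∀ j : Fin r, j ≠ i → Dp r (j:ℕ) (t+1) = Dp r (j:ℕ) t := by
        intro j hj; rw [hD j, if_neg (hne j hj), Nat.add_zero]
      have hDii : Dp r (i:ℕ) (t+1) = n + 1 := by rw [hD i, if_pos hiv, hDi]
      have hkeyid : av α * qv α ^ (1 + n) + qv α ^ (2 + n) = qv α ^ (1 + n) := by
        linear_combination (qv α ^ (1 + n)) * haq
      have hqpow : (0:ℝ) < qv α ^ (1 + n) := pow_pos hq0 _
      have hqpow2 : (0:ℝ) < qv α ^ (2 + n) := pow_pos hq0 _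
      have hiL := (hB i).1
      have hiU := (hB i).2
      rw [hDi] at hiU
      refine ⟨fun j => ?_, ?_, ?_⟩
      · by_cases hj : j = i
        · rw [hj, hLeq i, if_pos rfl, hDii, hDi]
          have hap := mul_pos ha0 (pow_pos hq0 (1+n))
          constructor
          · linarith
          · rw [show qv α ^ (1 + (n+1)) = qv α ^ (2 + n) from by ring]
            linarith
        · rw [hLeq j, if_neg hj, hDj j hj]; exact hB j
      · -- lower sum bound
        have hNL : (∑ j, φ (cL α φ r x (t+1) j))
            = φ (cL α φ r x t i + av α * qv α ^ (1 + n))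
              + ∑ j ∈ Finset.univ.erase i, φ (cL α φ r x t j) := by
          rw [hsplit (fun j => φ (cL α φ r x (t+1) j))]
          congr 1
          · rw [hLeq i, if_pos rfl, hDi]
          · exact Finset.sum_congr rfl (fun j hj => by
              rw [hLeq j, if_neg (Finset.mem_erase.mp hj).1])
        have hcond := hc
        unfold condP at hcond
        push_neg at hcond
        rw [hsplit (fun k => φ (cL α φ r x t k + qv α ^ (1 + Dp r (k:ℕ) t))), hDi] at hcond
        -- hcond : ... < x
        -- E1 : the jump of φ over the removed gap
        have hu1 : av α ≤ cL α φ r x t i + qv α ^ (2 + n) := by linarith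
        have hu2 : cL α φ r x t i + qv α ^ (2 + n) ≤ cL α φ r x t i + av α * qv α ^ (1 + n) := by
          rw [show qv α ^ (2 + n) = qv α * qv α ^ (1 + n) from by ring]
          have := mul_le_mul_of_nonneg_right hqa (le_of_lt hqpow)
          linarith
        have hu3 : cL α φ r x t i + av α * qv α ^ (1 + n) ≤ 1 := by
          have h1 := mul_le_mul_of_nonneg_right ha1 (le_of_lt hqpow)
          rw [one_mul] at h1
          linarith
        have E1 := Hup _ _ hu1 hu2 hu3
        have E1' : φ (cL α φ r x t i + av α * qv α ^ (1 + n))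
            - φ (cL α φ r x t i + qv α ^ (2 + n)) ≤ g₁ * (α * qv α ^ (1 + n)) := by
          have hvu : (cL α φ r x t i + av α * qv α ^ (1 + n))
              - (cL α φ r x t i + qv α ^ (2 + n)) = α * qv α ^ (1 + n) := by
            unfold av qv
            ring
          rw [hvu] at E1
          exact E1
        -- E2 : each other coordinate contributes at least g₂ qv^{2+n}
        have E2 : ∀ j ∈ Finset.univ.erase i, g₂ * qv α ^ (2 + n)
            ≤ φ (cL α φ r x t j + qv α ^ (1 + Dp r (j:ℕ) t)) - φ (cL α φ r x t j) := by
          intro j hj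
          have hjB := hB j
          have h1 : g₂ * qv α ^ (1 + Dp r (j:ℕ) t)
              ≤ φ (cL α φ r x t j + qv α ^ (1 + Dp r (j:ℕ) t)) - φ (cL α φ r x t j) := by
            have := Hlow (cL α φ r x t j) (cL α φ r x t j + qv α ^ (1 + Dp r (j:ℕ) t))
              hjB.1 (le_add_of_nonneg_right (le_of_lt (pow_pos hq0 _))) hjB.2
            simpa using this
          have h2 : qv α ^ (2 + n) ≤ qv α ^ (1 + Dp r (j:ℕ) t) := by
            refine hpowle _ _ ?_
            have := hDle j
            omega
          have h3 := mul_le_mul_of_nonneg_left h2 hg₂.le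
          linarith
        have E2sum : ((r:ℝ) - 1) * (g₂ * qv α ^ (2 + n))
            ≤ (∑ j ∈ Finset.univ.erase i, φ (cL α φ r x t j + qv α ^ (1 + Dp r (j:ℕ) t)))
              - ∑ j ∈ Finset.univ.erase i, φ (cL α φ r x t j) := by
          rw [← Finset.sum_sub_distrib]
          have hcard : (Finset.univ.erase i).card = r - 1 := by
            rw [Finset.card_erase_of_mem (Finset.mem_univ i), Finset.card_univ, Fintype.card_fin]
          calc ((r:ℝ) - 1) * (g₂ * qv α ^ (2 + n))
              = ((r - 1 : ℕ) : ℝ) * (g₂ * qv α ^ (2 + n)) := by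
                rw [Nat.cast_sub (by omega)]; norm_num
            _ = (Finset.univ.erase i).card • (g₂ * qv α ^ (2 + n)) := by
                rw [hcard, nsmul_eq_mul]
            _ = ∑ _j ∈ Finset.univ.erase i, (g₂ * qv α ^ (2 + n)) := (Finset.sum_const _).symm
            _ ≤ _ := Finset.sum_le_sum E2
        have E3 : g₁ * (α * qv α ^ (1 + n)) ≤ ((r:ℝ) - 1) * (g₂ * qv α ^ (2 + n)) := by
          rw [show qv α ^ (2 + n) = qv α * qv α ^ (1 + n) from by ring]
          have h1 := mul_le_mul_of_nonneg_right hkey (le_of_lt hqpow)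
          nlinarith [h1]
        rw [hNL]
        linarith
      · -- upper sum bound
        have hNU : (∑ j, φ (cL α φ r x (t+1) j + qv α ^ (1 + Dp r (j:ℕ) (t+1))))
            = φ (cL α φ r x t i + qv α ^ (1 + n))
              + ∑ j ∈ Finset.univ.erase i, φ (cL α φ r x t j + qv α ^ (1 + Dp r (j:ℕ) t)) := by
          rw [hsplit (fun j => φ (cL α φ r x (t+1) j + qv α ^ (1 + Dp r (j:ℕ) (t+1))))]
          congr 1
          · rw [hLeq i, if_pos rfl, hDii, hDi]
            have h1 : qv α ^ (1 + (n+1)) = qv α ^ (2 + n) := by ring_nf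
            rw [h1]
            congr 1
            linarith
          · refine Finset.sum_congr rfl (fun j hj => ?_)
            have hj' : j ≠ i := (Finset.mem_erase.mp hj).1
            rw [hLeq j, if_neg hj', hDj j hj']
        rw [hNU]
        have hOU := hhi
        rw [hsplit (fun k => φ (cL α φ r x t k + qv α ^ (1 + Dp r (k:ℕ) t))), hDi] at hOU
        linarith

end Invariant


section Digits

variable {α : ℝ} {φ : ℝ → ℝ} {r : ℕ} {x : ℝ}

/-- The binary digits of the point produced in coordinate `i`. -/
noncomputable def eps (α : ℝ) (φ : ℝ → ℝ) (r : ℕ) (x : ℝ) (i : Fin r) : ℕ → ℝ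
  | 0 => 1
  | (n+1) => if cL α φ r x (n * r + (i:ℕ) + 1) i = cL α φ r x (n * r + (i:ℕ)) i then 0 else 1

theorem eps_mem (i : Fin r) : ∀ m, eps α φ r x i m = 0 ∨ eps α φ r x i m = 1 := by
  intro m
  cases m with
  | zero => exact Or.inr rfl
  | succ n =>
    have heq : eps α φ r x i (n+1)
        = if cL α φ r x (n * r + (i:ℕ) + 1) i = cL α φ r x (n * r + (i:ℕ)) i then (0:ℝ)
          else 1 := rfl
    rw [heq]
    split
    · exact Or.inl rfl
    · exact Or.inr rfl

theorem digit_step (hα0 : 0 < α) (hα1 : α < 1) (i : Fin r) (n : ℕ) :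
    cL α φ r x (n * r + (i:ℕ) + 1) i
      = cL α φ r x (n * r + (i:ℕ)) i + eps α φ r x i (n+1) * (av α * qv α ^ (n+1)) := by
  have hr0 : 0 < r := i.pos
  have hq0 : 0 < qv α := by unfold qv; linarith
  have ha0 : 0 < av α := by unfold av; linarith
  set t := n * r + (i:ℕ) with ht
  have hmod : t % r = (i:ℕ) := addmul_mod i.isLt
  have hdiv : Dp r (i:ℕ) t = n := by
    have h1 := Dp_mod hr0 t
    rw [hmod, addmul_div hr0 i.isLt] at h1
    exact h1
  have heq : eps α φ r x i (n+1)
      = if cL α φ r x (t + 1) i = cL α φ r x t i then (0:ℝ) else 1 := rfl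
  by_cases hc : condP α φ r x t (cL α φ r x t) i
  · have h2 := cL_succ_pos α φ r x t i hmod.symm hc i
    rw [h2, heq, if_pos h2]
    ring
  · have h2 := cL_succ_neg α φ r x t i hmod.symm hc i
    rw [if_pos rfl, hdiv] at h2
    have hne : cL α φ r x (t+1) i ≠ cL α φ r x t i := by
      rw [h2]
      have := mul_pos ha0 (pow_pos hq0 (1 + n))
      intro hcontra
      nlinarith [hcontra]
    rw [h2, heq, if_neg hne, show (1:ℕ) + n = n + 1 from by omega]
    ring

theorem cL_const_before (i : Fin r) : ∀ t, t ≤ (i:ℕ) → cL α φ r x t i = av α := by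
  intro t
  induction t with
  | zero => intro _; rfl
  | succ t ih =>
    intro h
    have h1 : t % r = t := Nat.mod_eq_of_lt (lt_of_le_of_lt (by omega) i.isLt)
    have h2 : (i:ℕ) ≠ t % r := by rw [h1]; omega
    rw [cL_succ_ne α φ r x t i h2]
    exact ih (by omega)

theorem cL_const_between (i : Fin r) (n : ℕ) :
    ∀ s, s ≤ r - 1 → cL α φ r x (n * r + (i:ℕ) + 1 + s) i = cL α φ r x (n * r + (i:ℕ) + 1) i := by
  have hr0 : 0 < r := i.pos
  intro s
  induction s with
  | zero => intro _; rfl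
  | succ s ih =>
    intro hs
    have hi := i.isLt
    have hmul : (n+1) * r = n * r + r := Nat.succ_mul n r
    have hsplit : n * r + (i:ℕ) + 1 + (s+1) = (n * r + (i:ℕ) + 1 + s) + 1 := by omega
    rw [hsplit, cL_succ_ne α φ r x _ i ?_]
    · exact ih (by omega)
    · rcases Nat.lt_or_ge ((i:ℕ) + 1 + s) r with h | h
      · have he : n * r + (i:ℕ) + 1 + s = n * r + ((i:ℕ) + 1 + s) := by omega
        rw [he, addmul_mod h]
        omega
      · have he : n * r + (i:ℕ) + 1 + s = (n+1) * r + ((i:ℕ) + 1 + s - r) := by omega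
        rw [he, addmul_mod (show (i:ℕ) + 1 + s - r < r by omega)]
        omega

theorem cL_const_start (i : Fin r) (n : ℕ) :
    ∀ s, s ≤ (i:ℕ) → cL α φ r x (n * r + s) i = cL α φ r x (n * r) i := by
  intro s
  induction s with
  | zero => intro _; rfl
  | succ s ih =>
    intro hs
    have hsp : n * r + (s+1) = (n * r + s) + 1 := by omega
    rw [hsp, cL_succ_ne α φ r x _ i ?_]
    · exact ih (by omega)
    · rw [addmul_mod (show s < r from lt_of_lt_of_le (by omega) (le_of_lt i.isLt))]
      omega

theorem psum (hα0 : 0 < α) (hα1 : α < 1) (i : Fin r) :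
    ∀ n : ℕ, cL α φ r x (n * r + (i:ℕ)) i
      = ∑ m ∈ Finset.range (n+1), eps α φ r x i m * (av α * qv α ^ m) := by
  intro n
  induction n with
  | zero =>
    rw [Nat.zero_mul, Nat.zero_add, cL_const_before i (i:ℕ) le_rfl]
    simp [eps]
  | succ n ih =>
    have hr0 : 0 < r := i.pos
    have hmul : (n+1) * r = n * r + r := Nat.succ_mul n r
    have he : (n+1) * r + (i:ℕ) = n * r + (i:ℕ) + 1 + (r - 1) := by omega
    conv_rhs => rw [Finset.sum_range_succ]
    rw [he, cL_const_between i n (r-1) le_rfl, digit_step hα0 hα1 i n, ih]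

end Digits

section Tsum

variable {α : ℝ} {φ : ℝ → ℝ} {r : ℕ} {x : ℝ}

/-- The point of the Cantor set produced in coordinate `i`. -/
noncomputable def cPt (α : ℝ) (φ : ℝ → ℝ) (r : ℕ) (x : ℝ) (i : Fin r) : ℝ :=
  ∑' m : ℕ, eps α φ r x i m * ((1 + α) / 2) * ((1 - α) / 2) ^ m

theorem eps_bounds (i : Fin r) (hα0 : 0 < α) (hα1 : α < 1) (m : ℕ) :
    0 ≤ eps α φ r x i m * (av α * qv α ^ m) ∧
    eps α φ r x i m * (av α * qv α ^ m) ≤ av α * qv α ^ m := by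
  have hq0 : 0 < qv α := by unfold qv; linarith
  have ha0 : 0 < av α := by unfold av; linarith
  have hpos : 0 < av α * qv α ^ m := mul_pos ha0 (pow_pos hq0 m)
  rcases eps_mem (x := x) (φ := φ) i m with h | h <;> rw [h] <;>
    constructor <;> nlinarith [hpos]

theorem summable_eps (i : Fin r) (hα0 : 0 < α) (hα1 : α < 1) :
    Summable (fun m => eps α φ r x i m * (av α * qv α ^ m)) := by
  have hq0 : 0 < qv α := by unfold qv; linarith
  have hq1 : qv α < 1 := by unfold qv; linarith
  refine Summable.of_nonneg_of_le (fun m => (eps_bounds i hα0 hα1 m).1)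
    (fun m => (eps_bounds i hα0 hα1 m).2) ?_
  exact (summable_geometric_of_lt_one hq0.le hq1).mul_left (av α)

theorem cPt_eq (i : Fin r) :
    cPt α φ r x i = ∑' m : ℕ, eps α φ r x i m * (av α * qv α ^ m) := by
  unfold cPt av qv
  exact tsum_congr fun m => by ring

theorem tail_bounds (hα0 : 0 < α) (hα1 : α < 1) (i : Fin r) (k : ℕ) :
    (∑ m ∈ Finset.range k, eps α φ r x i m * (av α * qv α ^ m)) ≤ cPt α φ r x i ∧
    cPt α φ r x i ≤ (∑ m ∈ Finset.range k, eps α φ r x i m * (av α * qv α ^ m)) + qv α ^ k := by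
  have hq0 : 0 < qv α := by unfold qv; linarith
  have hq1 : qv α < 1 := by unfold qv; linarith
  have ha0 : 0 < av α := by unfold av; linarith
  have hsum := summable_eps (x := x) (φ := φ) i hα0 hα1
  have hsplit := Summable.sum_add_tsum_nat_add k hsum
  have htail0 : 0 ≤ ∑' m : ℕ, eps α φ r x i (m + k) * (av α * qv α ^ (m + k)) :=
    tsum_nonneg fun m => (eps_bounds i hα0 hα1 (m+k)).1
  have htail1 : (∑' m : ℕ, eps α φ r x i (m + k) * (av α * qv α ^ (m + k))) ≤ qv α ^ k := by
    have hgeo : Summable (fun m : ℕ => (av α * qv α ^ k) * qv α ^ m) :=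
      (summable_geometric_of_lt_one hq0.le hq1).mul_left _
    have hle : ∀ m : ℕ, eps α φ r x i (m + k) * (av α * qv α ^ (m + k))
        ≤ (av α * qv α ^ k) * qv α ^ m := by
      intro m
      have := (eps_bounds (x := x) (φ := φ) i hα0 hα1 (m+k)).2
      calc eps α φ r x i (m + k) * (av α * qv α ^ (m + k)) ≤ av α * qv α ^ (m + k) := this
        _ = (av α * qv α ^ k) * qv α ^ m := by rw [pow_add]; ring
    have h1 := Summable.tsum_le_tsum hle ((summable_nat_add_iff k).mpr hsum) hgeo
    have h2 : (∑' m : ℕ, (av α * qv α ^ k) * qv α ^ m) = qv α ^ k := by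
      rw [tsum_mul_left, tsum_geometric_of_lt_one hq0.le hq1]
      have hav : 1 - qv α = av α := by unfold av qv; ring
      rw [hav]
      field_simp
    rw [h2] at h1
    exact h1
  rw [cPt_eq]
  constructor <;> linarith

theorem cPt_between (hα0 : 0 < α) (hα1 : α < 1) (i : Fin r) (n : ℕ) :
    cL α φ r x (n * r) i ≤ cPt α φ r x i ∧
    cPt α φ r x i ≤ cL α φ r x (n * r) i + qv α ^ (n+1) := by
  have h0 : cL α φ r x (n * r) i = cL α φ r x (n * r + (i:ℕ)) i :=
    (cL_const_start i n (i:ℕ) le_rfl).symm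
  rw [h0, psum hα0 hα1 i n]
  exact tail_bounds hα0 hα1 i (n+1)

end Tsum


section MVT

theorem mvt_bounds {α : ℝ} {φ φ' : ℝ → ℝ} {g₁ g₂ : ℝ} (hg₂ : 0 < g₂) (hg : g₂ ≤ g₁)
    (hderiv : ∀ y ∈ Set.Icc ((1 + α) / 2) 1,
      HasDerivWithinAt φ (φ' y) (Set.Icc ((1 + α) / 2) 1) y)
    (hbound : ∀ y ∈ Set.Icc ((1 + α) / 2) 1, g₂ ≤ φ' y ∧ φ' y ≤ g₁) :
    ∀ u v : ℝ, (1 + α) / 2 ≤ u → u ≤ v → v ≤ 1 →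
      φ v - φ u ≤ g₁ * (v - u) ∧ g₂ * (v - u) ≤ φ v - φ u := by
  intro u v h1 h2 h3
  have hconv : Convex ℝ (Set.Icc ((1 + α) / 2) (1:ℝ)) := convex_Icc _ _
  have hu : u ∈ Set.Icc ((1 + α) / 2) (1:ℝ) := ⟨h1, le_trans h2 h3⟩
  have hv : v ∈ Set.Icc ((1 + α) / 2) (1:ℝ) := ⟨le_trans h1 h2, h3⟩
  constructor
  · have hb : ∀ y ∈ Set.Icc ((1 + α) / 2) (1:ℝ), ‖φ' y‖ ≤ g₁ := by
      intro y hy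
      rw [Real.norm_eq_abs, abs_le]
      have := hbound y hy
      constructor <;> linarith [this.1, this.2]
    have h4 := hconv.norm_image_sub_le_of_norm_hasDerivWithin_le hderiv hb hu hv
    rw [Real.norm_eq_abs, Real.norm_eq_abs, abs_of_nonneg (by linarith : (0:ℝ) ≤ v - u)] at h4
    calc φ v - φ u ≤ |φ v - φ u| := le_abs_self _
      _ ≤ g₁ * (v - u) := h4
  · set ψ : ℝ → ℝ := fun y => g₁ * y - φ y with hψ
    have hderivψ : ∀ y ∈ Set.Icc ((1 + α) / 2) (1:ℝ),
        HasDerivWithinAt ψ (g₁ - φ' y) (Set.Icc ((1 + α) / 2) 1) y := by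
      intro y hy
      have h5 : HasDerivWithinAt (fun z : ℝ => g₁ * z) (g₁ * 1) (Set.Icc ((1 + α) / 2) 1) y :=
        (hasDerivWithinAt_id y _).const_mul g₁
      have h6 := h5.sub (hderiv y hy)
      rw [mul_one] at h6
      exact h6
    have hbψ : ∀ y ∈ Set.Icc ((1 + α) / 2) (1:ℝ), ‖g₁ - φ' y‖ ≤ g₁ - g₂ := by
      intro y hy
      rw [Real.norm_eq_abs, abs_le]
      have := hbound y hy
      constructor <;> linarith [this.1, this.2]
    have h4 := hconv.norm_image_sub_le_of_norm_hasDerivWithin_le hderivψ hbψ hu hv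
    rw [Real.norm_eq_abs, Real.norm_eq_abs, abs_of_nonneg (by linarith : (0:ℝ) ≤ v - u)] at h4
    have h5 : ψ v - ψ u ≤ |ψ v - ψ u| := le_abs_self _
    have h6 : ψ v - ψ u = g₁ * (v - u) - (φ v - φ u) := by rw [hψ]; ring
    nlinarith [h4, h5, h6]

end MVT

section KeyIneq

theorem key_ineq {α g₁ g₂ : ℝ} (hα0 : 0 < α) (hα1 : α < 1) (hg₂ : 0 < g₂) (hg : g₂ ≤ g₁) :
    g₁ * α ≤ ((rPhi α g₁ g₂ : ℝ) - 1) * (g₂ * qv α) ∧ 2 ≤ rPhi α g₁ g₂ := by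
  have hg₁ : 0 < g₁ := lt_of_lt_of_le hg₂ hg
  have hs : g₁ / g₂ ≤ (sPhi g₁ g₂ : ℝ) := Nat.le_ceil _
  have hs1 : 1 ≤ sPhi g₁ g₂ := Nat.ceil_pos.mpr (div_pos hg₁ hg₂)
  have hsg : g₁ ≤ (sPhi g₁ g₂ : ℝ) * g₂ := by
    rw [div_le_iff₀ hg₂] at hs
    linarith
  have hr2 : 2 ≤ rPhi α g₁ g₂ := by
    unfold rPhi
    omega
  refine ⟨?_, hr2⟩
  have hrcast : (rPhi α g₁ g₂ : ℝ) = 2 * (sPhi g₁ g₂ : ℝ) + 2 * (kPhi α g₁ g₂ : ℝ) := by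
    unfold rPhi
    push_cast
    ring
  rw [hrcast]
  unfold qv
  set S := (sPhi g₁ g₂ : ℝ) with hS
  clear_value S
  have hS1 : (1:ℝ) ≤ S := by rw [hS]; exact_mod_cast hs1
  by_cases h3 : 1/3 < α
  · set K := (kPhi α g₁ g₂ : ℝ) with hK
    have hden : (0:ℝ) < (g₂ / g₁) * ((1 - α ^ 2) / 4) := by
      apply mul_pos (div_pos hg₂ hg₁)
      nlinarith
    have hk : ((3 * α - 1) / 2) / ((g₂ / g₁) * ((1 - α ^ 2) / 4)) ≤ K := by
      rw [hK, kPhi, if_pos h3]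
      exact Nat.le_ceil _
    rw [div_le_iff₀ hden] at hk
    have hk' : (3 * α - 1) / 2 * g₁ ≤ K * (g₂ * ((1 - α ^ 2) / 4)) := by
      have h5 := mul_le_mul_of_nonneg_right hk hg₁.le
      have h6 : K * (g₂ / g₁ * ((1 - α ^ 2) / 4)) * g₁ = K * (g₂ * ((1 - α ^ 2) / 4)) := by
        field_simp
      linarith [h5, h6.symm.le, h6.le]
    have hKpos : (0:ℝ) ≤ K := by rw [hK]; positivity
    have hA : (0:ℝ) ≤ (S * g₂ - g₁) * (1 - α^2) :=
      mul_nonneg (sub_nonneg.mpr hsg) (by nlinarith)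
    have hB : (0:ℝ) ≤ (g₁ - g₂) * (1 - α^2) :=
      mul_nonneg (sub_nonneg.mpr hg) (by nlinarith)
    have hC : (0:ℝ) ≤ g₁ * ((3*α - 1) * (3 - α)) :=
      mul_nonneg hg₁.le (mul_nonneg (by linarith) (by linarith))
    have hk4 : (3*α - 1) * g₁ * 2 ≤ K * (g₂ * (1 - α^2)) := by nlinarith [hk']
    have hgoal : (0:ℝ) ≤ ((2 * S + 2 * K - 1) * (g₂ * ((1 - α) / 2)) - g₁ * α) * (1 + α) := by
      nlinarith [hA, hB, hC, hk4]
    have h1α : (0:ℝ) < 1 + α := by linarith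
    have hfin := (mul_nonneg_iff_of_pos_right h1α).mp hgoal
    clear hr2 hs1 hs hrcast hk hk' hden hgoal
    linarith [hfin]
  · have hk0 : kPhi α g₁ g₂ = 0 := by rw [kPhi, if_neg h3]
    rw [hk0]
    push_cast
    clear hk0 hr2 hs1 hs hrcast
    have h3' : α ≤ 1/3 := not_lt.mp h3
    have hA : (0:ℝ) ≤ (S * g₂ - g₁) * (1 - α) :=
      mul_nonneg (sub_nonneg.mpr hsg) (by linarith)
    have hB : (0:ℝ) ≤ (g₁ - g₂) * (1 - α) :=
      mul_nonneg (sub_nonneg.mpr hg) (by linarith)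
    have hC : (0:ℝ) ≤ g₁ * (1 - 3*α) := mul_nonneg hg₁.le (by linarith)
    linarith [hA, hB, hC]

end KeyIneq

end SumsAux

open SumsAux in
/-- Sums of `r_{α,φ}` values of a `C¹` monotone map `φ` with derivative bounds
`0 < g₂ ≤ φ' ≤ g₁` on `[(1+α)/2, 1]` contain the stated closed interval. -/
theorem sums_of_C1_images (α : ℝ) (hα : α ∈ Set.Ioo (0 : ℝ) 1)
    (φ φ' : ℝ → ℝ) (g₁ g₂ : ℝ) (hg₂ : 0 < g₂) (hg : g₂ ≤ g₁)
    (hderiv : ∀ x ∈ Set.Icc ((1 + α) / 2) 1,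
      HasDerivWithinAt φ (φ' x) (Set.Icc ((1 + α) / 2) 1) x)
    (hcont : ContinuousOn φ' (Set.Icc ((1 + α) / 2) 1))
    (hmono : MonotoneOn φ (Set.Icc ((1 + α) / 2) 1))
    (hbound : ∀ x ∈ Set.Icc ((1 + α) / 2) 1, g₂ ≤ φ' x ∧ φ' x ≤ g₁) :
    Set.Icc
      (((rPhi α g₁ g₂ : ℝ) / 2 - 1) * φ 1 + ((rPhi α g₁ g₂ : ℝ) / 2 + 1) * φ ((1 + α) / 2))
      (((rPhi α g₁ g₂ : ℝ) / 2 + 1) * φ 1 + ((rPhi α g₁ g₂ : ℝ) / 2 - 1) * φ ((1 + α) / 2))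
      ⊆ {x : ℝ | ∃ c : Fin (rPhi α g₁ g₂) → ℝ,
          (∀ i, c i ∈ centralCantor α) ∧ x = ∑ i, φ (c i)} := by
  obtain ⟨hα0, hα1⟩ := hα
  intro y hy
  set r := rPhi α g₁ g₂ with hrdef
  obtain ⟨hy1, hy2⟩ := hy
  have hmvt := mvt_bounds hg₂ hg hderiv hbound
  have Hup : ∀ u v : ℝ, (1 + α) / 2 ≤ u → u ≤ v → v ≤ 1 → φ v - φ u ≤ g₁ * (v - u) :=
    fun u v h1 h2 h3 => (hmvt u v h1 h2 h3).1
  have Hlow : ∀ u v : ℝ, (1 + α) / 2 ≤ u → u ≤ v → v ≤ 1 → g₂ * (v - u) ≤ φ v - φ u :=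
    fun u v h1 h2 h3 => (hmvt u v h1 h2 h3).2
  obtain ⟨hkey, hr2⟩ := key_ineq (g₁ := g₁) (g₂ := g₂) hα0 hα1 hg₂ hg
  have hr0 : 0 < r := by omega
  have hq0 : 0 < qv α := by unfold qv; linarith
  have hq1 : qv α < 1 := by unfold qv; linarith
  have hr2' : (2:ℝ) ≤ (r:ℝ) := by exact_mod_cast hr2
  -- φ a < φ 1
  have h1mid : (1:ℝ) - (1 + α) / 2 = qv α := by unfold qv; ring
  have hgap : g₂ * qv α ≤ φ 1 - φ ((1 + α) / 2) := by
    have := Hlow ((1 + α) / 2) 1 le_rfl (by linarith) le_rfl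
    rw [h1mid] at this
    exact this
  have hqgap : 0 < φ 1 - φ ((1 + α) / 2) := lt_of_lt_of_le (mul_pos hg₂ hq0) hgap
  have hprod : 0 ≤ ((r:ℝ)/2 - 1) * (φ 1 - φ ((1 + α) / 2)) :=
    mul_nonneg (by linarith) hqgap.le
  have hx1 : (r:ℝ) * φ ((1 + α) / 2) ≤ y := by nlinarith [hy1, hprod]
  have hx2 : y ≤ (r:ℝ) * φ 1 := by nlinarith [hy2, hprod]
  have hinv := invariant hα0 hα1 hg₂ hg hr2 hkey Hup Hlow hx1 hx2
  -- the bound at every scale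
  have key : ∀ n : ℕ, |y - ∑ i, φ (cPt α φ r y i)| ≤ (r:ℝ) * (g₁ * qv α ^ (n+1)) := by
    intro n
    obtain ⟨hB, hlo, hhi⟩ := hinv (n * r)
    have hDn : ∀ j : Fin r, Dp r (j:ℕ) (n*r) = n := fun j => Dp_mul hr0 (j:ℕ) n
    have hq' : qv α ^ (n+1) = qv α ^ (1+n) := by rw [Nat.add_comm]
    have hhi' : y ≤ ∑ j, φ (cL α φ r y (n*r) j + qv α ^ (n+1)) := by
      refine le_trans hhi (le_of_eq (Finset.sum_congr rfl fun j _ => ?_))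
      rw [hDn j, hq']
    have hcoord : ∀ j : Fin r,
        φ (cL α φ r y (n*r) j) ≤ φ (cPt α φ r y j) ∧
        φ (cPt α φ r y j) ≤ φ (cL α φ r y (n*r) j + qv α ^ (n+1)) := by
      intro j
      have hc := cPt_between (x := y) (φ := φ) hα0 hα1 j n
      have hBj := hB j
      rw [hDn j] at hBj
      have hcl1 : cL α φ r y (n*r) j + qv α ^ (n+1) ≤ 1 := by rw [hq']; exact hBj.2
      constructor
      · have h5 := Hlow _ _ hBj.1 hc.1 (le_trans hc.2 hcl1)
        have h6 : 0 ≤ g₂ * (cPt α φ r y j - cL α φ r y (n*r) j) :=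
          mul_nonneg hg₂.le (by linarith [hc.1])
        linarith
      · have h5 := Hlow _ _ (le_trans hBj.1 hc.1) hc.2 hcl1
        have h6 : 0 ≤ g₂ * ((cL α φ r y (n*r) j + qv α ^ (n+1)) - cPt α φ r y j) :=
          mul_nonneg hg₂.le (by linarith [hc.2])
        linarith
    have hgapj : ∀ j : Fin r,
        φ (cL α φ r y (n*r) j + qv α ^ (n+1)) - φ (cL α φ r y (n*r) j)
          ≤ g₁ * qv α ^ (n+1) := by
      intro j
      have hBj := hB j
      rw [hDn j] at hBj
      have h4 := Hup (cL α φ r y (n*r) j) (cL α φ r y (n*r) j + qv α ^ (n+1)) hBj.1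
        (le_add_of_nonneg_right (pow_pos hq0 _).le) (by rw [hq']; exact hBj.2)
      simpa using h4
    have hs1 : (∑ j, φ (cL α φ r y (n*r) j)) ≤ ∑ j, φ (cPt α φ r y j) :=
      Finset.sum_le_sum fun j _ => (hcoord j).1
    have hs2 : (∑ j, φ (cPt α φ r y j)) ≤ ∑ j, φ (cL α φ r y (n*r) j + qv α ^ (n+1)) :=
      Finset.sum_le_sum fun j _ => (hcoord j).2
    have hs3 : (∑ j, φ (cL α φ r y (n*r) j + qv α ^ (n+1)))
        - (∑ j, φ (cL α φ r y (n*r) j)) ≤ (r:ℝ) * (g₁ * qv α ^ (n+1)) := by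
      rw [← Finset.sum_sub_distrib]
      calc (∑ j, (φ (cL α φ r y (n*r) j + qv α ^ (n+1)) - φ (cL α φ r y (n*r) j)))
          ≤ ∑ _j : Fin r, g₁ * qv α ^ (n+1) := Finset.sum_le_sum (fun j _ => hgapj j)
        _ = (r:ℝ) * (g₁ * qv α ^ (n+1)) := by
            rw [Finset.sum_const, Finset.card_univ, Fintype.card_fin, nsmul_eq_mul]
    rw [abs_sub_le_iff]
    constructor <;> linarith [hlo, hhi', hs1, hs2, hs3]
  -- pass to the limit
  have hlim : Filter.Tendsto (fun n : ℕ => (r:ℝ) * (g₁ * qv α ^ (n+1)))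
      Filter.atTop (nhds 0) := by
    have h := tendsto_pow_atTop_nhds_zero_of_lt_one hq0.le hq1
    have h2 := h.const_mul ((r:ℝ) * g₁ * qv α)
    rw [mul_zero] at h2
    exact h2.congr (fun n => by ring)
  have habs : |y - ∑ i, φ (cPt α φ r y i)| ≤ 0 :=
    ge_of_tendsto hlim (Filter.Eventually.of_forall key)
  have hfin : y = ∑ i, φ (cPt α φ r y i) := by
    have h0 := abs_nonneg (y - ∑ i, φ (cPt α φ r y i))
    have h1 := le_antisymm habs h0
    rw [abs_eq_zero, sub_eq_zero] at h1
    exact h1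
  exact ⟨fun i => cPt α φ r y i, fun i => ⟨eps α φ r y i, eps_mem i, rfl⟩, hfin⟩
end
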